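/- arXiv:0801.4069 — 4 statements merged into one kernel-verified Lean document; each statement's English description precedes it below -/
import Mathlib

section
/- Let T be a tournament. The acyclic components of T form a partition of its vertex set into acyclic autonomous subsets, the quotient tournament Ť is acyclically indecomposable, and T is isomorphic to the lexicographical sum Σ_{A∈Ť} T↾A of its acyclic components indexed by Ť. -/
universe u v

/-- `r` is a tournament relation on `V`: irreflexive and, for distinct vertices,
exactly one of the two directed edges is present. -/
def IsTournament {V : Type u} (r : V → V → Prop) : Prop :=
  (∀ x, ¬ r x x) ∧ ∀ x y : V, x ≠ y → (r x y ↔ ¬ r y x)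

/-- A subset `A` is autonomous in the tournament `r`. -/
def Autonomous {V : Type u} (r : V → V → Prop) (A : Set V) : Prop :=
  ∀ x ∈ A, ∀ x' ∈ A, ∀ y ∉ A, (r x y ↔ r x' y)

/-- A subset `A` is acyclic: it contains no 3-cycle. -/
def AcyclicSet {V : Type u} (r : V → V → Prop) (A : Set V) : Prop :=
  ¬ ∃ a ∈ A, ∃ b ∈ A, ∃ c ∈ A, r a b ∧ r b c ∧ r c a

/-- The acyclic component of a vertex `x`: the union of all acyclic autonomous
subsets containing `x`. -/
def acyclicComponent {V : Type u} (r : V → V → Prop) (x : V) : Set V :=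
  ⋃₀ {A : Set V | x ∈ A ∧ Autonomous r A ∧ AcyclicSet r A}

/-- `A` is an acyclic component of the tournament `r`. -/
def IsAcyclicComponent {V : Type u} (r : V → V → Prop) (A : Set V) : Prop :=
  ∃ x, A = acyclicComponent r x

/-- A tournament is acyclically indecomposable if every acyclic autonomous subset
has at most one element. -/
def AcyclicallyIndecomposable {V : Type u} (r : V → V → Prop) : Prop :=
  ∀ A : Set V, Autonomous r A → AcyclicSet r A → A.Subsingleton

/-- The type of acyclic components of `r`. -/
def AcComp {V : Type u} (r : V → V → Prop) : Type u :=
  {A : Set V // IsAcyclicComponent r A}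

/-- The quotient tournament `Ť` on the set of acyclic components. -/
def quotRel {V : Type u} (r : V → V → Prop) : AcComp r → AcComp r → Prop :=
  fun A B => A ≠ B ∧ ∃ x ∈ A.val, ∃ y ∈ B.val, r x y

/-- The lexicographical sum of the tournaments `rels i` indexed by the tournament `d`. -/
def lexSumRel {I : Type u} {F : I → Type v} (d : I → I → Prop)
    (rels : ∀ i, F i → F i → Prop) : (Σ i, F i) → (Σ i, F i) → Prop :=
  fun p q => (p.1 ≠ q.1 ∧ d p.1 q.1) ∨
    ∃ h : p.1 = q.1, rels q.1 (cast (congrArg F h) p.2) q.2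

/-- The subtournaments induced on the finite sets `s` and `t` are isomorphic. -/
def InducedIso {V : Type u} (r : V → V → Prop) (s t : Finset V) : Prop :=
  ∃ e : {x // x ∈ s} ≃ {x // x ∈ t},
    ∀ a b : {x // x ∈ s}, r a.val b.val ↔ r (e a).val (e b).val

/-- The profile of a tournament: the number of isomorphism classes of subtournaments
induced on `n`-element subsets of the vertex set. -/
noncomputable def profile {V : Type u} (r : V → V → Prop) (n : ℕ) : ℕ :=
  Nat.card (Quot (fun s t : {w : Finset V // w.card = n} => InducedIso r s.val t.val))

/-- `r` is (isomorphic to) a lexicographical sum of acyclic tournaments indexed by a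
finite tournament. -/
def IsFiniteLexSumOfAcyclic {V : Type u} (r : V → V → Prop) : Prop :=
  ∃ (I : Type) (d : I → I → Prop) (F : I → Type u)
    (rels : ∀ i, F i → F i → Prop),
    Finite I ∧ IsTournament d ∧
    (∀ i, IsTournament (rels i) ∧ AcyclicSet (rels i) Set.univ) ∧
    ∃ e : V ≃ (Σ i, F i), ∀ x y, r x y ↔ lexSumRel d rels (e x) (e y)

/-- A bundled tournament (vertex type together with its edge relation). -/
structure Tour : Type 1 where
  V : Type
  rel : V → V → Prop

/-- `S` is embeddable in the tournament `r`: `S` is isomorphic to a subtournament of `r`. -/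
def Tour.EmbedsIn {W : Type u} (S : Tour) (r : W → W → Prop) : Prop :=
  ∃ f : S.V → W, Function.Injective f ∧ ∀ x y, S.rel x y ↔ r (f x) (f y)

/-- The profile of a bundled tournament. -/
noncomputable def Tour.profile (T : Tour) (n : ℕ) : ℕ := _root_.profile T.rel n

/-- The quotient tournament `Ť` of a bundled tournament, on its acyclic components. -/
def Tour.check (T : Tour) : Tour := ⟨AcComp T.rel, quotRel T.rel⟩

/-- The tournament `C3[C]` for an acyclic tournament `C = (A, lt)`. -/
def c3Rel {A : Type} (lt : A → A → Prop) : A × Fin 3 → A × Fin 3 → Prop :=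
  fun p q => lt p.1 q.1 ∨ (p.1 = q.1 ∧
    ((p.2 = 0 ∧ q.2 = 1) ∨ (p.2 = 1 ∧ q.2 = 2) ∨ (p.2 = 2 ∧ q.2 = 0)))

/-- The tournament `V[C]` for an acyclic tournament `C = (A, lt)`; `none` is the extra vertex. -/
def vRel {A : Type} (lt : A → A → Prop) (p q : Option (A × Fin 2)) : Prop :=
  match p, q with
  | some p, some q => lt p.1 q.1 ∨ (p.1 = q.1 ∧ p.2 = 0 ∧ q.2 = 1)
  | none, some q => q.2 = 0
  | some p, none => p.2 = 1
  | none, none => False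

/-- The tournament `T[C]` for an acyclic tournament `C = (A, lt)`. -/
def tRel {A : Type} (lt : A → A → Prop) : A × Fin 2 → A × Fin 2 → Prop :=
  fun p q =>
    (p.2 = 0 ∧ q.2 = 0 ∧ lt p.1 q.1) ∨
    (p.1 = q.1 ∧ p.2 = 0 ∧ q.2 = 1) ∨
    (p.2 = 1 ∧ q.2 = 1 ∧ lt p.1 q.1) ∨
    (p.2 = 1 ∧ q.2 = 0 ∧ lt q.1 p.1) ∨
    (p.2 = 0 ∧ q.2 = 1 ∧ lt q.1 p.1)

/-- The tournament `U[C]` for an acyclic tournament `C = (A, lt)`. -/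
def uRel {A : Type} (lt : A → A → Prop) : A × Fin 2 → A × Fin 2 → Prop :=
  fun p q =>
    (p.2 = 0 ∧ q.2 = 0 ∧ lt p.1 q.1) ∨
    (p.1 = q.1 ∧ p.2 = 0 ∧ q.2 = 1) ∨
    (p.2 = 1 ∧ q.2 = 1 ∧ lt q.1 p.1) ∨
    (p.2 = 0 ∧ q.2 = 1 ∧ lt p.1 q.1) ∨
    (p.2 = 1 ∧ q.2 = 0 ∧ lt p.1 q.1)

/-- The tournament `H[C]` for an acyclic tournament `C = (A, lt)`. -/
def hRel {A : Type} (lt : A → A → Prop) : A × Fin 2 → A × Fin 2 → Prop :=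
  fun p q =>
    (p.2 = 0 ∧ q.2 = 0 ∧ lt p.1 q.1) ∨
    (p.1 = q.1 ∧ p.2 = 0 ∧ q.2 = 1) ∨
    (p.2 = 1 ∧ q.2 = 1 ∧ lt p.1 q.1) ∨
    (p.2 = 1 ∧ q.2 = 0 ∧ lt q.1 p.1) ∨
    (p.2 = 1 ∧ q.2 = 0 ∧ lt p.1 q.1)

/-- The tournament `K[C]` for an acyclic tournament `C = (A, lt)`. -/
def kRel {A : Type} (lt : A → A → Prop) : A × Fin 2 → A × Fin 2 → Prop :=
  fun p q =>
    (p.2 = 0 ∧ q.2 = 0 ∧ lt p.1 q.1) ∨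
    (p.1 = q.1 ∧ p.2 = 0 ∧ q.2 = 1) ∨
    (p.2 = 1 ∧ q.2 = 1 ∧ lt q.1 p.1) ∨
    (p.2 = 1 ∧ q.2 = 0 ∧ lt q.1 p.1) ∨
    (p.2 = 1 ∧ q.2 = 0 ∧ lt p.1 q.1)

def c3Tour (A : Type) (lt : A → A → Prop) : Tour := ⟨A × Fin 3, c3Rel lt⟩
def vTour (A : Type) (lt : A → A → Prop) : Tour := ⟨Option (A × Fin 2), vRel lt⟩
def tTour (A : Type) (lt : A → A → Prop) : Tour := ⟨A × Fin 2, tRel lt⟩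
def uTour (A : Type) (lt : A → A → Prop) : Tour := ⟨A × Fin 2, uRel lt⟩
def hTour (A : Type) (lt : A → A → Prop) : Tour := ⟨A × Fin 2, hRel lt⟩
def kTour (A : Type) (lt : A → A → Prop) : Tour := ⟨A × Fin 2, kRel lt⟩

/-- The order type `ω`: the natural numbers with the usual strict order. -/
def omegaLT : ℕ → ℕ → Prop := fun m n => m < n

/-- The order type `ω*`: the natural numbers with the reversed strict order. -/
def omegaStarLT : ℕ → ℕ → Prop := fun m n => n < m

/-- The set `𝔅` of twelve tournaments. -/
def frakB : List Tour :=
  [c3Tour ℕ omegaLT, vTour ℕ omegaLT, tTour ℕ omegaLT,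
   uTour ℕ omegaLT, hTour ℕ omegaLT, kTour ℕ omegaLT,
   c3Tour ℕ omegaStarLT, vTour ℕ omegaStarLT, tTour ℕ omegaStarLT,
   uTour ℕ omegaStarLT, hTour ℕ omegaStarLT, kTour ℕ omegaStarLT]

/-- The set `𝔅_{n̲}` of six tournaments built on the acyclic tournament `({0,…,n−1},<)`. -/
def frakBn (n : ℕ) : List Tour :=
  [c3Tour (Fin n) (· < ·), vTour (Fin n) (· < ·), tTour (Fin n) (· < ·),
   uTour (Fin n) (· < ·), hTour (Fin n) (· < ·), kTour (Fin n) (· < ·)]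

section AuxProofs

variable {V : Type u} {r : V → V → Prop}

lemma singleton_autonomous (x : V) : Autonomous r {x} := by
  intro u hu u' hu' y _
  rw [Set.mem_singleton_iff] at hu hu'
  subst hu; subst hu'; exact Iff.rfl

lemma singleton_acyclic (hT : IsTournament r) (x : V) : AcyclicSet r {x} := by
  rintro ⟨a, ha, b, hb, _c, _hc, h1, _, _⟩
  rw [Set.mem_singleton_iff] at ha hb
  rw [ha, hb] at h1
  exact hT.1 x h1

lemma mem_comp_self (hT : IsTournament r) (x : V) : x ∈ acyclicComponent r x :=
  ⟨{x}, ⟨rfl, singleton_autonomous x, singleton_acyclic hT x⟩, rfl⟩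

lemma no_cycle_two (hT : IsTournament r) {A : Set V} (hA : Autonomous r A)
    {a b c : V} (ha : a ∈ A) (hb : b ∈ A) (hc : c ∉ A)
    (h1 : r a b) (h2 : r b c) (h3 : r c a) : False := by
  have hac : a ≠ c := fun h => hc (h ▸ ha)
  have hrac : r a c := (hA a ha b hb c hc).mpr h2
  exact (hT.2 a c hac).mp hrac h3

lemma acyclic_union (hT : IsTournament r) {A B : Set V}
    (hA : Autonomous r A) (hB : Autonomous r B)
    (hAc : AcyclicSet r A) (hBc : AcyclicSet r B) :
    AcyclicSet r (A ∪ B) := by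
  rintro ⟨a, ha, b, hb, c, hc, h1, h2, h3⟩
  by_cases haA : a ∈ A <;> by_cases hbA : b ∈ A <;> by_cases hcA : c ∈ A
  · exact hAc ⟨a, haA, b, hbA, c, hcA, h1, h2, h3⟩
  · exact no_cycle_two hT hA haA hbA hcA h1 h2 h3
  · exact no_cycle_two hT hA hcA haA hbA h3 h1 h2
  · have hbB : b ∈ B := hb.resolve_left hbA
    have hcB : c ∈ B := hc.resolve_left hcA
    by_cases haB : a ∈ B
    · exact hBc ⟨a, haB, b, hbB, c, hcB, h1, h2, h3⟩
    · exact no_cycle_two hT hB hbB hcB haB h2 h3 h1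
  · exact no_cycle_two hT hA hbA hcA haA h2 h3 h1
  · have haB : a ∈ B := ha.resolve_left haA
    have hcB : c ∈ B := hc.resolve_left hcA
    by_cases hbB : b ∈ B
    · exact hBc ⟨a, haB, b, hbB, c, hcB, h1, h2, h3⟩
    · exact no_cycle_two hT hB hcB haB hbB h3 h1 h2
  · have haB : a ∈ B := ha.resolve_left haA
    have hbB : b ∈ B := hb.resolve_left hbA
    by_cases hcB : c ∈ B
    · exact hBc ⟨a, haB, b, hbB, c, hcB, h1, h2, h3⟩
    · exact no_cycle_two hT hB haB hbB hcB h1 h2 h3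
  · have haB : a ∈ B := ha.resolve_left haA
    have hbB : b ∈ B := hb.resolve_left hbA
    have hcB : c ∈ B := hc.resolve_left hcA
    exact hBc ⟨a, haB, b, hbB, c, hcB, h1, h2, h3⟩

lemma auton_union {A B : Set V} (hA : Autonomous r A) (hB : Autonomous r B)
    {x : V} (hxA : x ∈ A) (hxB : x ∈ B) : Autonomous r (A ∪ B) := by
  intro u hu u' hu' y hy
  have hyA : y ∉ A := fun h => hy (Or.inl h)
  have hyB : y ∉ B := fun h => hy (Or.inr h)
  have key : ∀ z ∈ A ∪ B, (r z y ↔ r x y) := by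
    rintro z (hz | hz)
    · exact hA z hz x hxA y hyA
    · exact hB z hz x hxB y hyB
  exact (key u hu).trans (key u' hu').symm

lemma comp_autonomous (x : V) : Autonomous r (acyclicComponent r x) := by
  intro u hu u' hu' y hy
  obtain ⟨A, hA, huA⟩ := hu
  obtain ⟨B, hB, huB⟩ := hu'
  have hyA : y ∉ A := fun h => hy ⟨A, hA, h⟩
  have hyB : y ∉ B := fun h => hy ⟨B, hB, h⟩
  exact (hA.2.1 u huA x hA.1 y hyA).trans (hB.2.1 u' huB x hB.1 y hyB).symm

lemma comp_acyclic (hT : IsTournament r) (x : V) : AcyclicSet r (acyclicComponent r x) := by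
  rintro ⟨a, ⟨A, hA, haA⟩, b, ⟨B, hB, hbB⟩, c, ⟨C, hC, hcC⟩, h1, h2, h3⟩
  have hAB_auto := auton_union hA.2.1 hB.2.1 hA.1 hB.1
  have hAB_ac := acyclic_union hT hA.2.1 hB.2.1 hA.2.2 hB.2.2
  have h_ac := acyclic_union hT hAB_auto hC.2.1 hAB_ac hC.2.2
  exact h_ac ⟨a, Or.inl (Or.inl haA), b, Or.inl (Or.inr hbB), c, Or.inr hcC, h1, h2, h3⟩

lemma comp_eq_of_inter (hT : IsTournament r) {x y z : V}
    (hzx : z ∈ acyclicComponent r x) (hzy : z ∈ acyclicComponent r y) :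
    acyclicComponent r x = acyclicComponent r y := by
  have hU_auto := auton_union (comp_autonomous x) (comp_autonomous y) hzx hzy
  have hU_ac := acyclic_union hT (comp_autonomous x) (comp_autonomous y)
    (comp_acyclic hT x) (comp_acyclic hT y)
  have hx : x ∈ acyclicComponent r x ∪ acyclicComponent r y := Or.inl (mem_comp_self hT x)
  have hy : y ∈ acyclicComponent r x ∪ acyclicComponent r y := Or.inr (mem_comp_self hT y)
  have h1 : acyclicComponent r x ∪ acyclicComponent r y ⊆ acyclicComponent r x :=
    Set.subset_sUnion_of_mem ⟨hx, hU_auto, hU_ac⟩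
  have h2 : acyclicComponent r x ∪ acyclicComponent r y ⊆ acyclicComponent r y :=
    Set.subset_sUnion_of_mem ⟨hy, hU_auto, hU_ac⟩
  exact subset_antisymm (Set.subset_union_left.trans h2) (Set.subset_union_right.trans h1)

lemma comp_of_mem_val (hT : IsTournament r) {A : AcComp r} {a : V} (h : a ∈ A.val) :
    acyclicComponent r a = A.val := by
  obtain ⟨u, hu⟩ := A.2
  have h' : a ∈ acyclicComponent r u := hu ▸ h
  exact (comp_eq_of_inter hT (mem_comp_self hT a) h').trans hu.symm

lemma acComp_auton (A : AcComp r) : Autonomous r A.val := by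
  obtain ⟨u, hu⟩ := A.2
  rw [hu]; exact comp_autonomous u

lemma acComp_acyclic (hT : IsTournament r) (A : AcComp r) : AcyclicSet r A.val := by
  obtain ⟨u, hu⟩ := A.2
  rw [hu]; exact comp_acyclic hT u

lemma acComp_eq_of_inter (hT : IsTournament r) {A B : AcComp r} {z : V}
    (hz1 : z ∈ A.val) (hz2 : z ∈ B.val) : A = B := by
  obtain ⟨u, hu⟩ := A.2
  obtain ⟨v, hv⟩ := B.2
  exact Subtype.ext (hu.trans ((comp_eq_of_inter hT (hu ▸ hz1) (hv ▸ hz2)).trans hv.symm))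

lemma acComp_disjoint (hT : IsTournament r) {A B : AcComp r} (h : A ≠ B) :
    Disjoint A.val B.val := by
  by_contra hd
  obtain ⟨z, hz1, hz2⟩ := Set.not_disjoint_iff.mp hd
  exact h (acComp_eq_of_inter hT hz1 hz2)

lemma quotRel_iff (hT : IsTournament r) {A B : AcComp r} (hAB : A ≠ B) {x y : V}
    (hx : x ∈ A.val) (hy : y ∈ B.val) : quotRel r A B ↔ r x y := by
  have hdisj := acComp_disjoint hT hAB
  constructor
  · rintro ⟨-, x', hx', y', hy', hr⟩
    have hy'A : y' ∉ A.val := Set.disjoint_right.mp hdisj hy'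
    have hxB : x ∉ B.val := Set.disjoint_left.mp hdisj hx
    have hxy' : x ≠ y' := fun h => hxB (h ▸ hy')
    have hxy : x ≠ y := fun h => hxB (h ▸ hy)
    have s1 : r x' y' ↔ r x y' := acComp_auton A x' hx' x hx y' hy'A
    have s2 : r y' x ↔ r y x := acComp_auton B y' hy' y hy x hxB
    have h4 : ¬ r y' x := (hT.2 x y' hxy').mp (s1.mp hr)
    have h5 : ¬ r y x := fun h => h4 (s2.mpr h)
    exact (hT.2 x y hxy).mpr h5
  · exact fun hr => ⟨hAB, x, hx, y, hy, hr⟩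

lemma quot_indec (hT : IsTournament r) : AcyclicallyIndecomposable (quotRel r) := by
  intro 𝒜 hauto hac A hA B hB
  by_contra hne
  set S : Set V := ⋃₀ (Subtype.val '' 𝒜) with hS
  have memS : ∀ z : V, z ∈ S ↔ ∃ C ∈ 𝒜, z ∈ C.val := by
    intro z
    constructor
    · rintro ⟨s, ⟨C, hC, rfl⟩, hz⟩; exact ⟨C, hC, hz⟩
    · rintro ⟨C, hC, hz⟩; exact ⟨C.val, ⟨C, hC, rfl⟩, hz⟩
  have hSauto : Autonomous r S := by
    intro u hu u' hu' y hy
    obtain ⟨C1, hC1, hu1⟩ := (memS u).mp hu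
    obtain ⟨C2, hC2, hu2⟩ := (memS u').mp hu'
    have hYmem : y ∈ (⟨acyclicComponent r y, y, rfl⟩ : AcComp r).val := mem_comp_self hT y
    have hYnot : (⟨acyclicComponent r y, y, rfl⟩ : AcComp r) ∉ 𝒜 :=
      fun h => hy ((memS y).mpr ⟨_, h, hYmem⟩)
    have h1 : C1 ≠ ⟨acyclicComponent r y, y, rfl⟩ := fun h => hYnot (h ▸ hC1)
    have h2 : C2 ≠ ⟨acyclicComponent r y, y, rfl⟩ := fun h => hYnot (h ▸ hC2)
    rw [← quotRel_iff hT h1 hu1 hYmem, ← quotRel_iff hT h2 hu2 hYmem]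
    exact hauto C1 hC1 C2 hC2 _ hYnot
  have hSac : AcyclicSet r S := by
    rintro ⟨a, ha, b, hb, c, hc, h1, h2, h3⟩
    obtain ⟨Ca, hCa, haa⟩ := (memS a).mp ha
    obtain ⟨Cb, hCb, hbb⟩ := (memS b).mp hb
    obtain ⟨Cc, hCc, hcc⟩ := (memS c).mp hc
    by_cases hbCa : b ∈ Ca.val
    · by_cases hcCa : c ∈ Ca.val
      · exact acComp_acyclic hT Ca ⟨a, haa, b, hbCa, c, hcCa, h1, h2, h3⟩
      · exact no_cycle_two hT (acComp_auton Ca) haa hbCa hcCa h1 h2 h3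
    · by_cases hcCa : c ∈ Ca.val
      · exact no_cycle_two hT (acComp_auton Ca) hcCa haa hbCa h3 h1 h2
      · by_cases hcCb : c ∈ Cb.val
        · have haCb : a ∉ Cb.val := by
            intro h
            exact hbCa ((acComp_eq_of_inter hT haa h) ▸ hbb)
          exact no_cycle_two hT (acComp_auton Cb) hbb hcCb haCb h2 h3 h1
        · have hab : Ca ≠ Cb := fun h => hbCa (h ▸ hbb)
          have hbc : Cb ≠ Cc := fun h => hcCb (h ▸ hcc)
          have hca : Cc ≠ Ca := fun h => hcCa (h ▸ hcc)
          exact hac ⟨Ca, hCa, Cb, hCb, Cc, hCc,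
            ⟨hab, a, haa, b, hbb, h1⟩, ⟨hbc, b, hbb, c, hcc, h2⟩, ⟨hca.symm ∘ Eq.symm, c, hcc, a, haa, h3⟩⟩
  obtain ⟨u, hu⟩ := A.2
  have huA : u ∈ A.val := hu ▸ mem_comp_self hT u
  obtain ⟨v, hv⟩ := B.2
  have hvB : v ∈ B.val := hv ▸ mem_comp_self hT v
  have huS : u ∈ S := (memS u).mpr ⟨A, hA, huA⟩
  have hvS : v ∈ S := (memS v).mpr ⟨B, hB, hvB⟩
  have hsub : S ⊆ A.val := by
    have h1 : S ⊆ acyclicComponent r u := Set.subset_sUnion_of_mem ⟨huS, hSauto, hSac⟩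
    rwa [comp_of_mem_val hT huA] at h1
  exact hne (acComp_eq_of_inter hT (hsub hvS) hvB)

lemma lexSum_char (p q : Σ A : AcComp r, ↥A.val) :
    lexSumRel (quotRel r) (fun A => fun a b : ↥A.val => r a.val b.val) p q ↔
    ((p.1 ≠ q.1 ∧ quotRel r p.1 q.1) ∨ (p.1 = q.1 ∧ r p.2.val q.2.val)) := by
  obtain ⟨A, a⟩ := p
  obtain ⟨B, b⟩ := q
  constructor
  · rintro (⟨hne, hq⟩ | ⟨h, hr⟩)
    · exact Or.inl ⟨hne, hq⟩
    · have h' : A = B := h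
      subst h'
      exact Or.inr ⟨rfl, hr⟩
  · rintro (⟨hne, hq⟩ | ⟨h, hr⟩)
    · exact Or.inl ⟨hne, hq⟩
    · have h' : A = B := h
      subst h'
      exact Or.inr ⟨rfl, hr⟩

end AuxProofs

/-- The acyclic components of a tournament `T` form a partition of its
vertex set into acyclic autonomous subsets, the quotient tournament `Ť` is acyclically
indecomposable, and `T` is isomorphic to the lexicographical sum of its acyclic
components indexed by `Ť`. -/
theorem acyclic_decomposition {V : Type u} (r : V → V → Prop) (hT : IsTournament r) :
    (∀ x : V, x ∈ acyclicComponent r x) ∧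
    (∀ x : V, Autonomous r (acyclicComponent r x) ∧ AcyclicSet r (acyclicComponent r x)) ∧
    (∀ x y : V, acyclicComponent r x = acyclicComponent r y ∨
      Disjoint (acyclicComponent r x) (acyclicComponent r y)) ∧
    AcyclicallyIndecomposable (quotRel r) ∧
    ∃ e : V ≃ (Σ A : AcComp r, ↥A.val),
      ∀ x y : V, r x y ↔
        lexSumRel (quotRel r) (fun A => fun a b : ↥A.val => r a.val b.val) (e x) (e y) := by
  refine ⟨fun x => mem_comp_self hT x,
    fun x => ⟨comp_autonomous x, comp_acyclic hT x⟩, ?_, quot_indec hT, ?_⟩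
  · intro x y
    rcases em (Disjoint (acyclicComponent r x) (acyclicComponent r y)) with h | h
    · exact Or.inr h
    · obtain ⟨z, h1, h2⟩ := Set.not_disjoint_iff.mp h
      exact Or.inl (comp_eq_of_inter hT h1 h2)
  · refine ⟨⟨fun x => ⟨⟨acyclicComponent r x, x, rfl⟩, ⟨x, mem_comp_self hT x⟩⟩,
      fun p => p.2.val, fun x => rfl, ?_⟩, ?_⟩
    · rintro ⟨A, av, hav⟩
      have h : (⟨acyclicComponent r av, av, rfl⟩ : AcComp r) = A :=
        Subtype.ext (comp_of_mem_val hT hav)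
      subst h
      rfl
    · intro x y
      rw [lexSum_char]
      by_cases h : acyclicComponent r x = acyclicComponent r y
      · have hC : (⟨acyclicComponent r x, x, rfl⟩ : AcComp r) = ⟨acyclicComponent r y, y, rfl⟩ :=
          Subtype.ext h
        constructor
        · exact fun hr => Or.inr ⟨hC, hr⟩
        · rintro (⟨hne, _⟩ | ⟨_, hr⟩)
          · exact absurd hC hne
          · exact hr
      · have hne : (⟨acyclicComponent r x, x, rfl⟩ : AcComp r) ≠ ⟨acyclicComponent r y, y, rfl⟩ :=
          fun he => h (congrArg Subtype.val he)
        constructor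
        · exact fun hr => Or.inl ⟨hne, (quotRel_iff hT hne (mem_comp_self hT x)
            (mem_comp_self hT y)).mpr hr⟩
        · rintro (⟨_, hq⟩ | ⟨heq, _⟩)
          · exact (quotRel_iff hT hne (mem_comp_self hT x) (mem_comp_self hT y)).mp hq
          · exact absurd heq hne
end

section
/- If a tournament T is isomorphic to a lexicographical sum Σ_{i∈D} T_i of nonempty acyclic tournaments T_i indexed by an acyclically indecomposable tournament D, then the images under this isomorphism of the vertex sets V(T_i) are exactly the acyclic components of T; in particular D is isomorphic to the quotient tournament Ť. -/
universe u v

section Helpers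

variable {I : Type v} {F : I → Type v}

lemma lexSum_same {d : I → I → Prop} {rels : ∀ i, F i → F i → Prop} (i : I) (a b : F i) :
    lexSumRel d rels ⟨i, a⟩ ⟨i, b⟩ ↔ rels i a b := by
  constructor
  · rintro (⟨h, _⟩ | ⟨h, hr⟩)
    · exact absurd rfl h
    · exact hr
  · intro h
    exact Or.inr ⟨rfl, h⟩

lemma lexSum_diff {d : I → I → Prop} {rels : ∀ i, F i → F i → Prop} {i j : I}
    (hij : i ≠ j) (a : F i) (b : F j) :
    lexSumRel d rels ⟨i, a⟩ ⟨j, b⟩ ↔ d i j := by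
  constructor
  · rintro (⟨_, hd⟩ | ⟨h, _⟩)
    · exact hd
    · exact absurd h hij
  · intro h
    exact Or.inl ⟨hij, h⟩

end Helpers

/-- If a tournament `T` is isomorphic to a lexicographical sum of
nonempty acyclic tournaments indexed by an acyclically indecomposable tournament `D`,
then the images under this isomorphism of the summand vertex sets are exactly the
acyclic components of `T`; in particular `D` is isomorphic to the quotient tournament `Ť`. -/
theorem uniqueness_of_acyclic_decomposition {V : Type u} {I : Type v} {F : I → Type v}
    (r : V → V → Prop) (d : I → I → Prop) (rels : ∀ i, F i → F i → Prop)
    (hT : IsTournament r) (hD : IsTournament d)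
    (hDind : AcyclicallyIndecomposable d)
    (hrels : ∀ i, IsTournament (rels i) ∧ AcyclicSet (rels i) Set.univ ∧ Nonempty (F i))
    (e : (Σ i, F i) ≃ V)
    (he : ∀ p q : Σ i, F i, lexSumRel d rels p q ↔ r (e p) (e q)) :
    ({A : Set V | ∃ i : I, A = Set.range (fun x : F i => e ⟨i, x⟩)} =
        {A : Set V | IsAcyclicComponent r A}) ∧
    ∃ g : I → AcComp r, Function.Bijective g ∧ ∀ i j : I, d i j ↔ quotRel r (g i) (g j) := by
  classical
  set R : I → Set V := fun i => Set.range (fun x : F i => e ⟨i, x⟩) with hR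
  have hne : ∀ i, Nonempty (F i) := fun i => (hrels i).2.2
  -- membership characterization
  have hmem : ∀ (i : I) (y : V), y ∈ R i ↔ ∃ a : F i, e ⟨i, a⟩ = y := by
    intro i y; rfl
  have hself : ∀ x : V, x ∈ R (e.symm x).1 := by
    intro x
    refine (hmem _ _).2 ⟨(e.symm x).2, ?_⟩
    rw [Sigma.eta]; exact e.apply_symm_apply x
  -- R i is autonomous
  have hRaut : ∀ i, Autonomous r (R i) := by
    intro i x hx x' hx' y hy
    obtain ⟨a, rfl⟩ := (hmem i x).1 hx
    obtain ⟨a', rfl⟩ := (hmem i x').1 hx'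
    have hy' : (e.symm y).1 ≠ i := by
      intro h
      apply hy
      rcases hp : e.symm y with ⟨i0, b⟩
      rw [hp] at h
      dsimp at h
      subst h
      exact (hmem _ y).2 ⟨b, by rw [← hp, e.apply_symm_apply]⟩
    have hy2 : y = e ⟨(e.symm y).1, (e.symm y).2⟩ := by rw [Sigma.eta, e.apply_symm_apply]
    rw [hy2, ← he, ← he, lexSum_diff (fun h => hy' h.symm),
      lexSum_diff (fun h => hy' h.symm)]
  -- R i is acyclic
  have hRacyc : ∀ i, AcyclicSet r (R i) := by
    rintro i ⟨x, hx, y, hy, z, hz, hxy, hyz, hzx⟩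
    obtain ⟨a, rfl⟩ := (hmem i x).1 hx
    obtain ⟨b, rfl⟩ := (hmem i y).1 hy
    obtain ⟨c, rfl⟩ := (hmem i z).1 hz
    exact (hrels i).2.1 ⟨a, trivial, b, trivial, c, trivial,
      (lexSum_same i a b).1 ((he _ _).2 hxy),
      (lexSum_same i b c).1 ((he _ _).2 hyz),
      (lexSum_same i c a).1 ((he _ _).2 hzx)⟩
  -- every autonomous acyclic set is included in a single summand
  have hsub : ∀ A : Set V, Autonomous r A → AcyclicSet r A →
      ∀ x ∈ A, A ⊆ R (e.symm x).1 := by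
    intro A hAaut hAacyc x hx
    set J : Set I := {i | ∃ a : F i, e ⟨i, a⟩ ∈ A} with hJ
    have hJmem : ∀ y ∈ A, (e.symm y).1 ∈ J := by
      intro y hy
      refine ⟨(e.symm y).2, ?_⟩
      rw [Sigma.eta, e.apply_symm_apply]; exact hy
    have hJaut : Autonomous d J := by
      intro i hi i' hi' j hj
      obtain ⟨a, ha⟩ := hi
      obtain ⟨a', ha'⟩ := hi'
      obtain ⟨b⟩ := hne j
      have hij : i ≠ j := fun h => hj (h ▸ ⟨a, ha⟩)
      have hi'j : i' ≠ j := fun h => hj (h ▸ ⟨a', ha'⟩)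
      have hyA : e ⟨j, b⟩ ∉ A := fun h => hj ⟨b, h⟩
      rw [← lexSum_diff (d := d) (rels := rels) hij a b, ← lexSum_diff (d := d) (rels := rels) hi'j a' b,
        he, he]
      exact hAaut _ ha _ ha' _ hyA
    have hJacyc : AcyclicSet d J := by
      rintro ⟨i, hi, j, hj, k, hk, dij, djk, dki⟩
      obtain ⟨a, ha⟩ := hi
      obtain ⟨b, hb⟩ := hj
      obtain ⟨c, hc⟩ := hk
      have hij : i ≠ j := fun h => hD.1 j (h ▸ dij)
      have hjk : j ≠ k := fun h => hD.1 k (h ▸ djk)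
      have hki : k ≠ i := fun h => hD.1 i (h ▸ dki)
      exact hAacyc ⟨_, ha, _, hb, _, hc,
        (he _ _).1 ((lexSum_diff hij a b).2 dij),
        (he _ _).1 ((lexSum_diff hjk b c).2 djk),
        (he _ _).1 ((lexSum_diff hki c a).2 dki)⟩
    have hsing := hDind J hJaut hJacyc
    intro y hy
    have h1 : (e.symm y).1 = (e.symm x).1 := hsing (hJmem y hy) (hJmem x hx)
    have := hself y
    rwa [h1] at this
  -- the acyclic component of x is exactly its summand
  have hcomp : ∀ x : V, acyclicComponent r x = R (e.symm x).1 := by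
    intro x
    apply Set.Subset.antisymm
    · apply Set.sUnion_subset
      rintro A ⟨hxA, hAaut, hAacyc⟩
      exact hsub A hAaut hAacyc x hxA
    · exact Set.subset_sUnion_of_mem ⟨hself x, hRaut _, hRacyc _⟩
  have hcomp' : ∀ (i : I) (a : F i), acyclicComponent r (e ⟨i, a⟩) = R i := by
    intro i a
    rw [hcomp, e.symm_apply_apply]
  -- injectivity of R
  have hRinj : Function.Injective R := by
    intro i j h
    obtain ⟨a⟩ := hne i
    have : e ⟨i, a⟩ ∈ R j := h ▸ (hmem i _).2 ⟨a, rfl⟩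
    obtain ⟨b, hb⟩ := (hmem j _).1 this
    have := e.injective hb
    exact (congrArg Sigma.fst this).symm
  constructor
  · ext A
    simp only [Set.mem_setOf_eq]
    constructor
    · rintro ⟨i, rfl⟩
      obtain ⟨a⟩ := hne i
      exact ⟨e ⟨i, a⟩, (hcomp' i a).symm⟩
    · rintro ⟨x, rfl⟩
      exact ⟨(e.symm x).1, hcomp x⟩
  · refine ⟨fun i => ⟨R i, e ⟨i, Classical.arbitrary (F i)⟩, (hcomp' i _).symm⟩, ⟨?_, ?_⟩, ?_⟩
    · intro i j h
      exact hRinj (congrArg Subtype.val h)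
    · rintro ⟨A, x, rfl⟩
      exact ⟨(e.symm x).1, Subtype.ext (hcomp x).symm⟩
    · intro i j
      constructor
      · intro hd
        have hij : i ≠ j := fun h => hD.1 j (h ▸ hd)
        refine ⟨fun h => hij (hRinj (congrArg Subtype.val h)),
          e ⟨i, Classical.arbitrary (F i)⟩, (hmem i _).2 ⟨_, rfl⟩,
          e ⟨j, Classical.arbitrary (F j)⟩, (hmem j _).2 ⟨_, rfl⟩, ?_⟩
        exact (he _ _).1 ((lexSum_diff hij _ _).2 hd)
      · rintro ⟨hne', x, hx, y, hy, hr⟩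
        obtain ⟨a, rfl⟩ := (hmem i x).1 hx
        obtain ⟨b, rfl⟩ := (hmem j y).1 hy
        have hij : i ≠ j := fun h => hne' (Subtype.ext (congrArg R h))
        exact (lexSum_diff hij a b).1 ((he _ _).2 hr)
end

section
/- Every infinite acyclically indecomposable tournament contains a subtournament isomorphic to a member of 𝔅. -/
universe u v

/-!
Suppose that `r` contains no member of `𝔅`. We choose edges `β₀ → γ₀, β₁ → γ₁, …` such that
each new edge closes a three-cycle with every earlier one (`βₙ` and `γₙ` beat `βₘ` and are beaten
by `γₘ` for `m < n`) while infinitely many vertices still close a three-cycle with all edges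
chosen so far; the edges then form `K[ω*]`, a contradiction.

To find the next edge inside the infinite set `G` of such vertices, take by Ramsey's theorem an
increasing sequence in `G` (reversing all edges if necessary), extend it to a maximal acyclic
`W ⊆ G`, and apply acyclic indecomposability to the intervals `[d (2k), d (2k+1)]` of `W`: each
is separated by a vertex outside `W`. Repeated use of Ramsey's theorem shows that the separators
either produce a member of `𝔅` or can be inserted into the chain. If infinitely many of them lie
outside `G`, an endpoint of one earlier edge is the apex of a `V[ω]`. If they lie in `G`, they
close three-cycles with edges of `W` by maximality, and the analysis of these cycles produces
either a member of `𝔅` or an edge of `W` with infinitely many of the separators as apexes.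
-/

namespace IsTournament

variable {V : Type u} {r : V → V → Prop}

theorem ne_of_rel (hT : IsTournament r) {x y : V} (h : r x y) : x ≠ y := by
  rintro rfl
  exact hT.1 x h

theorem asymm (hT : IsTournament r) {x y : V} (h : r x y) : ¬ r y x :=
  (hT.2 x y (hT.ne_of_rel h)).1 h

theorem rel_of_not_rel (hT : IsTournament r) {x y : V} (hne : x ≠ y) (h : ¬ r y x) : r x y :=
  (hT.2 x y hne).2 h

theorem eq_of_not_rel_of_not_rel (hT : IsTournament r) {x y : V} (hxy : ¬ r x y)
    (hyx : ¬ r y x) : x = y := by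
  by_contra hne
  exact hxy (hT.rel_of_not_rel hne hyx)

protected theorem flip (hT : IsTournament r) : IsTournament (flip r) :=
  ⟨hT.1, fun x y hne => hT.2 y x hne.symm⟩

theorem orient (hT : IsTournament r) {x y : ℕ → V} (hne : ∀ i j, i < j → x i ≠ y j)
    (h : (∀ i j, i < j → r (x i) (y j)) ∨ ∀ i j, i < j → ¬ r (x i) (y j)) :
    (∀ i j, i < j → r (x i) (y j)) ∨ ∀ i j, i < j → r (y j) (x i) :=
  h.imp_right fun h i j hij => hT.rel_of_not_rel (hne i j hij).symm (h i j hij)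

end IsTournament

theorem AcyclicSet.rel_trans {V : Type u} {r : V → V → Prop} (hT : IsTournament r) {W : Set V}
    (hW : AcyclicSet r W) {a b c : V} (ha : a ∈ W) (hb : b ∈ W) (hc : c ∈ W)
    (hab : r a b) (hbc : r b c) : r a c := by
  refine hT.rel_of_not_rel ?_ fun hca => hW ⟨a, ha, b, hb, c, hc, hab, hbc, hca⟩
  rintro rfl
  exact hT.asymm hab hbc

theorem AcyclicallyIndecomposable.flip {V : Type u} {r : V → V → Prop} (hT : IsTournament r)
    (hAI : AcyclicallyIndecomposable r) : AcyclicallyIndecomposable (flip r) := by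
  refine fun A hA hAc => hAI A (fun x hx x' hx' y hy => ?_) ?_
  · have hxy : x ≠ y := fun e => hy (e ▸ hx)
    have hx'y : x' ≠ y := fun e => hy (e ▸ hx')
    rw [hT.2 x y hxy, hT.2 x' y hx'y, not_iff_not]
    exact hA x hx x' hx' y hy
  · rintro ⟨a, ha, b, hb, c, hc, hab, hbc, hca⟩
    exact hAc ⟨a, ha, c, hc, b, hb, hca, hbc, hab⟩

section Ramsey

theorem exists_infinite_fiber_of_infinite {C : Type*} [Finite C] {S : Set ℕ} (hS : S.Infinite)
    (f : ℕ → C) : ∃ k, {n ∈ S | f n = k}.Infinite := by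
  have := hS.to_subtype
  obtain ⟨k, hk⟩ := Finite.exists_infinite_fiber fun n : S => f n
  refine ⟨k, ((Set.infinite_coe_iff.mp hk).image Subtype.val_injective.injOn).mono ?_⟩
  rintro _ ⟨⟨n, hn⟩, hnk, rfl⟩
  exact ⟨hn, hnk⟩

theorem exists_strictMono_const {C : Type*} [Finite C] (f : ℕ → C) :
    ∃ (k : C) (φ : ℕ → ℕ), StrictMono φ ∧ ∀ n, f (φ n) = k := by
  obtain ⟨k, hk⟩ := exists_infinite_fiber_of_infinite Set.infinite_univ f
  simp only [Set.mem_univ, true_and] at hk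
  exact ⟨k, Nat.nth (f · = k), Nat.nth_strictMono hk, Nat.nth_mem_of_infinite hk⟩

/-- The inductive step of Ramsey's theorem. -/
theorem exists_infinite_colour_from_sInf {C : Type*} [Finite C] (c : ℕ → ℕ → C)
    (S : {S : Set ℕ // S.Infinite}) :
    ∃ (T : {S : Set ℕ // S.Infinite}) (k : C), ∀ n ∈ T.1, sInf S.1 < n ∧ n ∈ S.1 ∧
      c (sInf S.1) n = k := by
  obtain ⟨k, hk⟩ := exists_infinite_fiber_of_infinite
    (S.2.sdiff (Set.finite_Iic (sInf S.1))) (c (sInf S.1))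
  exact ⟨⟨_, hk⟩, k, fun n ⟨⟨hnS, hn⟩, hnk⟩ => ⟨not_le.mp hn, hnS, hnk⟩⟩

/-- Ramsey's theorem for pairs. -/
theorem exists_strictMono_monochromatic {C : Type*} [Finite C] (c : ℕ → ℕ → C) :
    ∃ (φ : ℕ → ℕ) (k : C), StrictMono φ ∧ ∀ i j, i < j → c (φ i) (φ j) = k := by
  choose next colour hnext using exists_infinite_colour_from_sInf c
  let S : ℕ → {S : Set ℕ // S.Infinite} := fun n => next^[n] ⟨Set.univ, Set.infinite_univ⟩
  have hS : ∀ n, S (n + 1) = next (S n) := fun n => Function.iterate_succ_apply' _ _ _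
  let a : ℕ → ℕ := fun n => sInf (S n).1
  have ha : ∀ n, a n ∈ (S n).1 := fun n => Nat.sInf_mem (S n).2.nonempty
  have hsub : ∀ i j, i < j → (S j).1 ⊆ (S (i + 1)).1 := by
    intro i j hij
    induction j, hij using Nat.le_induction with
    | base => exact le_rfl
    | succ j _ ih => exact fun n hn => ih ((hnext _ n (hS j ▸ hn)).2.1)
  have hlt : ∀ i j, i < j → a i < a j ∧ c (a i) (a j) = colour (S i) := fun i j hij =>
    let h := hnext (S i) (a j) (hS i ▸ hsub i j hij (ha j))
    ⟨h.1, h.2.2⟩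
  obtain ⟨k, ψ, hψ, hk⟩ := exists_strictMono_const fun n => colour (S n)
  exact ⟨a ∘ ψ, k, fun i j hij => (hlt _ _ (hψ hij)).1,
    fun i j hij => (hlt _ _ (hψ hij)).2.trans (hk i)⟩

theorem exists_strictMono_homogeneous (Ps : List (ℕ → ℕ → Prop)) :
    ∃ φ : ℕ → ℕ, StrictMono φ ∧ ∀ P ∈ Ps,
      (∀ i j, i < j → P (φ i) (φ j)) ∨ ∀ i j, i < j → ¬ P (φ i) (φ j) := by
  classical
  obtain ⟨φ, k, hφ, hk⟩ := exists_strictMono_monochromatic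
    fun i j (n : Fin Ps.length) => decide (Ps[n] i j)
  refine ⟨φ, hφ, fun P hP => ?_⟩
  obtain ⟨n, rfl⟩ := List.mem_iff_get.mp hP
  cases hkn : k n
  · exact Or.inr fun i j hij => by simpa [hkn] using congrFun (hk i j hij) n
  · exact Or.inl fun i j hij => by simpa [hkn] using congrFun (hk i j hij) n

theorem exists_strictMono_forall_or_forall_not (P : ℕ → Prop) :
    ∃ φ : ℕ → ℕ, StrictMono φ ∧ ((∀ n, P (φ n)) ∨ ∀ n, ¬ P (φ n)) := by
  classical
  obtain ⟨k, φ, hφ, hk⟩ := exists_strictMono_const fun n => decide (P n)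
  refine ⟨φ, hφ, ?_⟩
  cases k
  · exact Or.inr fun n => by simpa using hk n
  · exact Or.inl fun n => by simpa using hk n

end Ramsey

section Embeddings

variable {V : Type u} {r : V → V → Prop}

theorem Tour.embedsIn_of_forall_rel {S : Tour} (hS : ∀ x y, x ≠ y → S.rel x y ∨ S.rel y x)
    (hT : IsTournament r) (f : S.V → V) (hf : ∀ x y, S.rel x y → r (f x) (f y)) :
    S.EmbedsIn r := by
  refine ⟨f, fun x y hxy => ?_, fun x y => ⟨hf x y, fun h => ?_⟩⟩
  · by_contra hne
    rcases hS x y hne with h | h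
    · exact hT.1 (f y) (hxy ▸ hf x y h)
    · exact hT.1 (f y) (hxy ▸ hf y x h)
  · by_cases hxy : x = y
    · subst hxy
      exact absurd h (hT.1 _)
    · exact (hS x y hxy).resolve_right fun h' => hT.asymm h (hf y x h')

variable {A : Type} {lt : A → A → Prop}

theorem c3Rel_total (hlt : ∀ a b, lt a b ∨ a = b ∨ lt b a) :
    ∀ x y, x ≠ y → c3Rel lt x y ∨ c3Rel lt y x := by
  rintro ⟨a, i⟩ ⟨b, j⟩ hne
  rcases hlt a b with h | rfl | h <;> fin_cases i <;> fin_cases j <;> simp_all [c3Rel]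

theorem vRel_total (hlt : ∀ a b, lt a b ∨ a = b ∨ lt b a) :
    ∀ x y, x ≠ y → vRel lt x y ∨ vRel lt y x := by
  rintro (_ | ⟨a, i⟩) (_ | ⟨b, j⟩) hne
  · exact absurd rfl hne
  · fin_cases j <;> simp [vRel]
  · fin_cases i <;> simp [vRel]
  · rcases hlt a b with h | rfl | h <;> fin_cases i <;> fin_cases j <;> simp_all [vRel]

theorem tRel_total (hlt : ∀ a b, lt a b ∨ a = b ∨ lt b a) :
    ∀ x y, x ≠ y → tRel lt x y ∨ tRel lt y x := by
  rintro ⟨a, i⟩ ⟨b, j⟩ hne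
  rcases hlt a b with h | rfl | h <;> fin_cases i <;> fin_cases j <;> simp_all [tRel]

theorem uRel_total (hlt : ∀ a b, lt a b ∨ a = b ∨ lt b a) :
    ∀ x y, x ≠ y → uRel lt x y ∨ uRel lt y x := by
  rintro ⟨a, i⟩ ⟨b, j⟩ hne
  rcases hlt a b with h | rfl | h <;> fin_cases i <;> fin_cases j <;> simp_all [uRel]

theorem hRel_total (hlt : ∀ a b, lt a b ∨ a = b ∨ lt b a) :
    ∀ x y, x ≠ y → hRel lt x y ∨ hRel lt y x := by
  rintro ⟨a, i⟩ ⟨b, j⟩ hne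
  rcases hlt a b with h | rfl | h <;> fin_cases i <;> fin_cases j <;> simp_all [hRel]

theorem kRel_total (hlt : ∀ a b, lt a b ∨ a = b ∨ lt b a) :
    ∀ x y, x ≠ y → kRel lt x y ∨ kRel lt y x := by
  rintro ⟨a, i⟩ ⟨b, j⟩ hne
  rcases hlt a b with h | rfl | h <;> fin_cases i <;> fin_cases j <;> simp_all [kRel]

theorem tTour_embedsIn (hlt : ∀ a b, lt a b ∨ a = b ∨ lt b a) (hT : IsTournament r)
    (X Y : A → V) (hXX : ∀ a b, lt a b → r (X a) (X b)) (hXY : ∀ a, r (X a) (Y a))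
    (hYY : ∀ a b, lt a b → r (Y a) (Y b)) (hYX : ∀ a b, lt a b → r (Y b) (X a))
    (hXY' : ∀ a b, lt a b → r (X b) (Y a)) : (tTour A lt).EmbedsIn r := by
  refine Tour.embedsIn_of_forall_rel (tRel_total hlt) hT (fun p => ![X, Y] p.2 p.1) ?_
  rintro ⟨a, i⟩ ⟨b, j⟩ h
  fin_cases i <;> fin_cases j <;> simp [tTour, tRel] at h ⊢ <;> aesop

theorem uTour_embedsIn (hlt : ∀ a b, lt a b ∨ a = b ∨ lt b a) (hT : IsTournament r)
    (X Y : A → V) (hXX : ∀ a b, lt a b → r (X a) (X b)) (hXY : ∀ a, r (X a) (Y a))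
    (hYY : ∀ a b, lt a b → r (Y b) (Y a)) (hXY' : ∀ a b, lt a b → r (X a) (Y b))
    (hYX : ∀ a b, lt a b → r (Y a) (X b)) : (uTour A lt).EmbedsIn r := by
  refine Tour.embedsIn_of_forall_rel (uRel_total hlt) hT (fun p => ![X, Y] p.2 p.1) ?_
  rintro ⟨a, i⟩ ⟨b, j⟩ h
  fin_cases i <;> fin_cases j <;> simp [uTour, uRel] at h ⊢ <;> aesop

theorem hTour_embedsIn (hlt : ∀ a b, lt a b ∨ a = b ∨ lt b a) (hT : IsTournament r)
    (X Y : A → V) (hXX : ∀ a b, lt a b → r (X a) (X b)) (hXY : ∀ a, r (X a) (Y a))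
    (hYY : ∀ a b, lt a b → r (Y a) (Y b)) (hYX : ∀ a b, lt a b → r (Y b) (X a))
    (hYX' : ∀ a b, lt a b → r (Y a) (X b)) : (hTour A lt).EmbedsIn r := by
  refine Tour.embedsIn_of_forall_rel (hRel_total hlt) hT (fun p => ![X, Y] p.2 p.1) ?_
  rintro ⟨a, i⟩ ⟨b, j⟩ h
  fin_cases i <;> fin_cases j <;> simp [hTour, hRel] at h ⊢ <;> aesop

theorem kTour_embedsIn (hlt : ∀ a b, lt a b ∨ a = b ∨ lt b a) (hT : IsTournament r)
    (X Y : A → V) (hXX : ∀ a b, lt a b → r (X a) (X b)) (hXY : ∀ a, r (X a) (Y a))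
    (hYY : ∀ a b, lt a b → r (Y b) (Y a)) (hYX : ∀ a b, lt a b → r (Y b) (X a))
    (hYX' : ∀ a b, lt a b → r (Y a) (X b)) : (kTour A lt).EmbedsIn r := by
  refine Tour.embedsIn_of_forall_rel (kRel_total hlt) hT (fun p => ![X, Y] p.2 p.1) ?_
  rintro ⟨a, i⟩ ⟨b, j⟩ h
  fin_cases i <;> fin_cases j <;> simp [kTour, kRel] at h ⊢ <;> aesop

theorem vTour_embedsIn (hlt : ∀ a b, lt a b ∨ a = b ∨ lt b a) (hT : IsTournament r) (t : V)
    (X Y : A → V) (hXY : ∀ a, r (X a) (Y a))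
    (hcross : ∀ a b, lt a b → r (X a) (X b) ∧ r (X a) (Y b) ∧ r (Y a) (X b) ∧ r (Y a) (Y b))
    (htX : ∀ a, r t (X a)) (hYt : ∀ a, r (Y a) t) : (vTour A lt).EmbedsIn r := by
  refine Tour.embedsIn_of_forall_rel (vRel_total hlt) hT
    (fun p => p.elim t fun p => ![X, Y] p.2 p.1) ?_
  rintro (_ | ⟨a, i⟩) (_ | ⟨b, j⟩) h <;> try fin_cases i
  all_goals try fin_cases j
  all_goals simp [vTour, vRel] at h ⊢ <;> aesop

theorem c3Tour_embedsIn (hlt : ∀ a b, lt a b ∨ a = b ∨ lt b a) (hT : IsTournament r)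
    (X Y Z : A → V) (hXY : ∀ a, r (X a) (Y a)) (hYZ : ∀ a, r (Y a) (Z a))
    (hZX : ∀ a, r (Z a) (X a))
    (hcross : ∀ a b, lt a b → ∀ x ∈ [X a, Y a, Z a], ∀ y ∈ [X b, Y b, Z b], r x y) :
    (c3Tour A lt).EmbedsIn r := by
  refine Tour.embedsIn_of_forall_rel (c3Rel_total hlt) hT (fun p => ![X, Y, Z] p.2 p.1) ?_
  rintro ⟨a, i⟩ ⟨b, j⟩ h
  fin_cases i <;> fin_cases j <;> simp [c3Tour, c3Rel] at h ⊢ <;> aesop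

end Embeddings

section Duality

variable {V : Type u} {r : V → V → Prop}

def ContainsFrakB (r : V → V → Prop) : Prop := ∃ S ∈ frakB, S.EmbedsIn r

theorem omegaLT_trichotomous : ∀ a b, omegaLT a b ∨ a = b ∨ omegaLT b a :=
  lt_trichotomy

theorem omegaStarLT_trichotomous : ∀ a b, omegaStarLT a b ∨ a = b ∨ omegaStarLT b a :=
  fun a b => (lt_trichotomy b a).imp_right (Or.imp_left Eq.symm)

theorem frakB_rel_total {S : Tour} (hS : S ∈ frakB) : ∀ x y, x ≠ y → S.rel x y ∨ S.rel y x := by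
  simp only [frakB, List.mem_cons, List.not_mem_nil, or_false] at hS
  rcases hS with rfl | rfl | rfl | rfl | rfl | rfl | rfl | rfl | rfl | rfl | rfl | rfl
  exacts [c3Rel_total omegaLT_trichotomous, vRel_total omegaLT_trichotomous,
    tRel_total omegaLT_trichotomous, uRel_total omegaLT_trichotomous,
    hRel_total omegaLT_trichotomous, kRel_total omegaLT_trichotomous,
    c3Rel_total omegaStarLT_trichotomous, vRel_total omegaStarLT_trichotomous,
    tRel_total omegaStarLT_trichotomous, uRel_total omegaStarLT_trichotomous,
    hRel_total omegaStarLT_trichotomous, kRel_total omegaStarLT_trichotomous]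

section Reversal

variable {A : Type} {lt : A → A → Prop}

theorem c3Rel_flip {x y : A × Fin 3} (h : c3Rel (flip lt) x y) :
    c3Rel lt (y.1, y.2.rev) (x.1, x.2.rev) := by
  obtain ⟨a, i⟩ := x; obtain ⟨b, j⟩ := y
  fin_cases i <;> fin_cases j <;> simp_all [c3Rel, flip, Fin.rev, eq_comm]

theorem vRel_flip {x y : Option (A × Fin 2)} (h : vRel (flip lt) x y) :
    vRel lt (y.map fun p => (p.1, p.2.rev)) (x.map fun p => (p.1, p.2.rev)) := by
  rcases x with _ | ⟨a, i⟩ <;> rcases y with _ | ⟨b, j⟩ <;> try fin_cases i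
  all_goals try fin_cases j
  all_goals simp_all [vRel, flip, Fin.rev, eq_comm]

theorem tRel_flip {x y : A × Fin 2} (h : tRel (flip lt) x y) :
    tRel lt (y.1, y.2.rev) (x.1, x.2.rev) := by
  obtain ⟨a, i⟩ := x; obtain ⟨b, j⟩ := y
  fin_cases i <;> fin_cases j <;> simp_all [tRel, flip, Fin.rev, eq_comm]

theorem hRel_flip {x y : A × Fin 2} (h : hRel (flip lt) x y) :
    hRel lt (y.1, y.2.rev) (x.1, x.2.rev) := by
  obtain ⟨a, i⟩ := x; obtain ⟨b, j⟩ := y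
  fin_cases i <;> fin_cases j <;> simp_all [hRel, flip, Fin.rev, eq_comm]

theorem kRel_rev {x y : A × Fin 2} (h : kRel lt x y) :
    kRel lt (y.1, y.2.rev) (x.1, x.2.rev) := by
  obtain ⟨a, i⟩ := x; obtain ⟨b, j⟩ := y
  fin_cases i <;> fin_cases j <;> simp_all [kRel, Fin.rev, eq_comm, or_comm]

end Reversal

/-- The reverse of `U[ω]` contains `U[ω*]`, on the odd first-layer and even second-layer
vertices. -/
theorem uRel_omegaStarLT_odd_even {x y : ℕ × Fin 2} (h : uRel omegaStarLT x y) :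
    uRel omegaLT (2 * y.1 + 1 - y.2, y.2) (2 * x.1 + 1 - x.2, x.2) := by
  obtain ⟨a, i⟩ := x; obtain ⟨b, j⟩ := y
  fin_cases i <;> fin_cases j <;> simp_all [uRel, omegaLT, omegaStarLT] <;> omega

/-- The reverse of `U[ω*]` contains `U[ω]`, on the even first-layer and odd second-layer
vertices. -/
theorem uRel_omegaLT_even_odd {x y : ℕ × Fin 2} (h : uRel omegaLT x y) :
    uRel omegaStarLT (2 * y.1 + y.2, y.2) (2 * x.1 + x.2, x.2) := by
  obtain ⟨a, i⟩ := x; obtain ⟨b, j⟩ := y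
  fin_cases i <;> fin_cases j <;> simp_all [uRel, omegaLT, omegaStarLT] <;> omega

theorem frakB_exists_antihom {S : Tour} (hS : S ∈ frakB) :
    ∃ S' ∈ frakB, ∃ g : S'.V → S.V, ∀ x y, S'.rel x y → S.rel (g y) (g x) := by
  simp only [frakB, List.mem_cons, List.not_mem_nil, or_false] at hS
  rcases hS with rfl | rfl | rfl | rfl | rfl | rfl | rfl | rfl | rfl | rfl | rfl | rfl
  exacts [⟨c3Tour ℕ omegaStarLT, by simp [frakB], _, fun _ _ => c3Rel_flip (lt := omegaLT)⟩,
    ⟨vTour ℕ omegaStarLT, by simp [frakB], _, fun _ _ => vRel_flip (lt := omegaLT)⟩,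
    ⟨tTour ℕ omegaStarLT, by simp [frakB], _, fun _ _ => tRel_flip (lt := omegaLT)⟩,
    ⟨uTour ℕ omegaStarLT, by simp [frakB], _, fun _ _ => uRel_omegaStarLT_odd_even⟩,
    ⟨hTour ℕ omegaStarLT, by simp [frakB], _, fun _ _ => hRel_flip (lt := omegaLT)⟩,
    ⟨kTour ℕ omegaLT, by simp [frakB], _, fun _ _ => kRel_rev⟩,
    ⟨c3Tour ℕ omegaLT, by simp [frakB], _, fun _ _ => c3Rel_flip (lt := omegaStarLT)⟩,
    ⟨vTour ℕ omegaLT, by simp [frakB], _, fun _ _ => vRel_flip (lt := omegaStarLT)⟩,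
    ⟨tTour ℕ omegaLT, by simp [frakB], _, fun _ _ => tRel_flip (lt := omegaStarLT)⟩,
    ⟨uTour ℕ omegaLT, by simp [frakB], _, fun _ _ => uRel_omegaLT_even_odd⟩,
    ⟨hTour ℕ omegaLT, by simp [frakB], _, fun _ _ => hRel_flip (lt := omegaStarLT)⟩,
    ⟨kTour ℕ omegaStarLT, by simp [frakB], _, fun _ _ => kRel_rev⟩]

theorem ContainsFrakB.of_flip (hT : IsTournament r) (h : ContainsFrakB (flip r)) :
    ContainsFrakB r := by
  obtain ⟨S, hS, f, -, hf⟩ := h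
  obtain ⟨S', hS', g, hg⟩ := frakB_exists_antihom hS
  exact ⟨S', hS', Tour.embedsIn_of_forall_rel (frakB_rel_total hS') hT (f ∘ g)
    fun x y hxy => (hf _ _).1 (hg x y hxy)⟩

end Duality

section Chains

variable {V : Type u} {r : V → V → Prop}

theorem IsTournament.exists_strictMono_oriented (hT : IsTournament r)
    (L : List ((ℕ → V) × (ℕ → V))) (hL : ∀ p ∈ L, ∀ i j, i < j → p.1 i ≠ p.2 j) :
    ∃ φ : ℕ → ℕ, StrictMono φ ∧ ∀ p ∈ L,
      (∀ i j, i < j → r (p.1 (φ i)) (p.2 (φ j))) ∨ ∀ i j, i < j → r (p.2 (φ j)) (p.1 (φ i)) := by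
  obtain ⟨φ, hφ, h⟩ := exists_strictMono_homogeneous (L.map fun p i j => r (p.1 i) (p.2 j))
  exact ⟨φ, hφ, fun p hp => hT.orient (x := p.1 ∘ φ) (y := p.2 ∘ φ)
    (fun i j hij => hL p hp _ _ (hφ hij)) (h _ (List.mem_map_of_mem hp))⟩

def PairsAscending (r : V → V → Prop) (u v : ℕ → V) : Prop :=
  ∀ i j, i < j → r (u i) (u j) ∧ r (u i) (v j) ∧ r (v i) (u j) ∧ r (v i) (v j)

theorem PairsAscending.comp {u v : ℕ → V} (h : PairsAscending r u v) {φ : ℕ → ℕ}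
    (hφ : StrictMono φ) : PairsAscending r (u ∘ φ) (v ∘ φ) :=
  fun _ _ hij => h _ _ (hφ hij)

theorem PairsAscending.swap {u v : ℕ → V} (h : PairsAscending r u v) : PairsAscending r v u :=
  fun i j hij => let h := h i j hij; ⟨h.2.2.2, h.2.2.1, h.2.1, h.1⟩

theorem pairsAscending_even_odd {x : ℕ → V} (hx : ∀ i j, i < j → r (x i) (x j)) :
    PairsAscending r (fun g => x (2 * g)) (fun g => x (2 * g + 1)) :=
  fun _ _ _ => ⟨hx _ _ (by omega), hx _ _ (by omega), hx _ _ (by omega), hx _ _ (by omega)⟩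

/-- Depending on the remaining relations, this is `H[lt]`, `K[lt]`, `T[lt]`, or `U` over the
dual order. -/
theorem containsFrakB_of_partners_beat_earlier (hT : IsTournament r) {lt : ℕ → ℕ → Prop}
    (hlt : lt = omegaLT ∨ lt = omegaStarLT) {X Y : ℕ → V}
    (hXX : ∀ a b, lt a b → r (X a) (X b)) (hXY : ∀ a, r (X a) (Y a))
    (hYX : ∀ a b, lt a b → r (Y b) (X a))
    (hα : (∀ a b, lt a b → r (Y a) (X b)) ∨ ∀ a b, lt a b → r (X b) (Y a))
    (hγ : (∀ a b, lt a b → r (Y a) (Y b)) ∨ ∀ a b, lt a b → r (Y b) (Y a)) :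
    ContainsFrakB r := by
  have htri : ∀ a b, lt a b ∨ a = b ∨ lt b a := by
    rcases hlt with rfl | rfl
    exacts [omegaLT_trichotomous, omegaStarLT_trichotomous]
  have hmem : ∀ S ∈ [hTour ℕ lt, kTour ℕ lt, tTour ℕ lt, uTour ℕ lt], S ∈ frakB := by
    rcases hlt with rfl | rfl <;> simp [frakB]
  rcases hα with hα | hα <;> rcases hγ with hγ | hγ
  · exact ⟨_, hmem _ (by simp), hTour_embedsIn htri hT X Y hXX hXY hγ hYX hα⟩
  · exact ⟨_, hmem _ (by simp), kTour_embedsIn htri hT X Y hXX hXY hγ hYX hα⟩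
  · exact ⟨_, hmem _ (by simp), tTour_embedsIn htri hT X Y hXX hXY hγ hYX hα⟩
  · exact .of_flip hT ⟨_, hmem _ (by simp), uTour_embedsIn htri hT.flip Y X hγ hXY hXX hα hYX⟩

theorem containsFrakB_of_ascending_partners (hT : IsTournament r) {X Y : ℕ → V}
    (hY : ∀ i j, i < j → r (Y i) (Y j)) (hXY : ∀ i, r (X i) (Y i))
    (hYX : ∀ i j, i < j → r (Y j) (X i))
    (hα : (∀ i j, i < j → r (Y i) (X j)) ∨ ∀ i j, i < j → r (X j) (Y i))
    (hX : (∀ i j, i < j → r (X i) (X j)) ∨ ∀ i j, i < j → r (X j) (X i)) :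
    ContainsFrakB r := by
  rcases hX with hX | hX
  · exact containsFrakB_of_partners_beat_earlier hT (.inl rfl) hX hXY hYX hα (.inl hY)
  rcases hα with hα | hα
  · exact containsFrakB_of_partners_beat_earlier hT (lt := omegaStarLT) (.inr rfl)
      (fun a b h => hX b a h) hXY (fun a b h => hα b a h) (.inl fun a b h => hYX b a h)
      (.inr fun a b h => hY b a h)
  · exact ⟨_, by simp [frakB], uTour_embedsIn omegaStarLT_trichotomous hT X Y
      (fun a b h => hX b a h) hXY (fun a b h => hY b a h) (fun a b h => hα b a h)
      (fun a b h => hYX b a h)⟩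

theorem containsFrakB_of_cycles_homogeneous (hT : IsTournament r) {u v w : ℕ → V}
    (huv : ∀ i, r (u i) (v i)) (hvw : ∀ i, r (v i) (w i)) (hwu : ∀ i, r (w i) (u i))
    (hch : PairsAscending r u v)
    (h1 : (∀ i j, i < j → r (w i) (u j)) ∨ ∀ i j, i < j → r (u j) (w i))
    (h2 : (∀ i j, i < j → r (u i) (w j)) ∨ ∀ i j, i < j → r (w j) (u i))
    (h3 : (∀ i j, i < j → r (w i) (v j)) ∨ ∀ i j, i < j → r (v j) (w i))
    (h4 : (∀ i j, i < j → r (v i) (w j)) ∨ ∀ i j, i < j → r (w j) (v i))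
    (h5 : (∀ i j, i < j → r (w i) (w j)) ∨ ∀ i j, i < j → r (w j) (w i)) :
    ContainsFrakB r := by
  rcases h4 with h4 | h4
  swap
  · exact containsFrakB_of_partners_beat_earlier hT (.inl rfl) (fun i j h => (hch i j h).2.2.2)
      hvw h4 h3 h5
  rcases h1 with h1 | h1
  swap
  · exact containsFrakB_of_ascending_partners hT (fun i j h => (hch i j h).1) hwu h1 h2 h5
  rcases h3 with h3 | h3
  swap
  · exact ⟨_, by simp [frakB], vTour_embedsIn omegaLT_trichotomous hT (w 0) (fun k => u (k + 1))
      (fun k => v (k + 1)) (fun k => huv _) (fun i j (h : i < j) => hch _ _ (by omega))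
      (fun k => h1 _ _ (by omega)) (fun k => h3 _ _ (by omega))⟩
  rcases h5 with h5 | h5
  swap
  · exact ⟨_, by simp [frakB], uTour_embedsIn omegaLT_trichotomous hT v w
      (fun i j h => (hch i j h).2.2.2) hvw h5 h4 h3⟩
  rcases h2 with h2 | h2
  · refine ⟨_, by simp [frakB], c3Tour_embedsIn omegaLT_trichotomous hT u v w huv hvw hwu ?_⟩
    intro i j hij x hx y hy
    simp only [List.mem_cons, List.not_mem_nil, or_false] at hx hy
    obtain ⟨huu, huv', hvu, hvv⟩ := hch i j hij
    rcases hx with rfl | rfl | rfl <;> rcases hy with rfl | rfl | rfl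
    exacts [huu, huv', h2 _ _ hij, hvu, hvv, h4 _ _ hij, h1 _ _ hij, h3 _ _ hij, h5 _ _ hij]
  · exact ⟨_, by simp [frakB], vTour_embedsIn omegaLT_trichotomous hT (u 0) (fun k => v (k + 1))
      (fun k => w (k + 1)) (fun k => hvw _)
      (fun i j (h : i < j) => ⟨(hch _ _ (by omega)).2.2.2, h4 _ _ (by omega), h3 _ _ (by omega),
        h5 _ _ (by omega)⟩)
      (fun k => (hch 0 (k + 1) (by omega)).2.1) (fun k => h2 _ _ (by omega))⟩

theorem containsFrakB_of_cycles (hT : IsTournament r) {u v w : ℕ → V}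
    (huv : ∀ i, r (u i) (v i)) (hvw : ∀ i, r (v i) (w i)) (hwu : ∀ i, r (w i) (u i))
    (hch : PairsAscending r u v) (hw : Function.Injective w) (hwu_ne : ∀ i j, w i ≠ u j)
    (hwv_ne : ∀ i j, w i ≠ v j) : ContainsFrakB r := by
  obtain ⟨φ, hφ, h⟩ := hT.exists_strictMono_oriented [(w, u), (u, w), (w, v), (v, w), (w, w)]
    (by simpa using ⟨fun i j _ => hwu_ne i j, fun i j _ => (hwu_ne j i).symm,
      fun i j _ => hwv_ne i j, fun i j _ => (hwv_ne j i).symm, fun i j hij => hw.ne hij.ne⟩)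
  exact containsFrakB_of_cycles_homogeneous hT (u := u ∘ φ) (v := v ∘ φ) (w := w ∘ φ)
    (fun _ => huv _) (fun _ => hvw _) (fun _ => hwu _) (hch.comp hφ) (h (w, u) (by simp))
    (h (u, w) (by simp)) (h (w, v) (by simp)) (h (v, w) (by simp)) (h (w, w) (by simp))

theorem containsFrakB_of_cycles_of_descending (hT : IsTournament r) {u v w : ℕ → V}
    (huv : ∀ i, r (u i) (v i)) (hvw : ∀ i, r (v i) (w i)) (hwu : ∀ i, r (w i) (u i))
    (hch : PairsAscending (flip r) u v) (hw : Function.Injective w) (hwu_ne : ∀ i j, w i ≠ u j)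
    (hwv_ne : ∀ i j, w i ≠ v j) : ContainsFrakB r :=
  .of_flip hT (containsFrakB_of_cycles hT.flip (u := v) (v := u) huv hwu hvw hch.swap hw hwv_ne
    hwu_ne)

theorem containsFrakB_or_pairsAscending_of_homogeneous (hT : IsTournament r) {u v w : ℕ → V}
    (huv : ∀ i, r (u i) (v i)) (huw : ∀ i, r (u i) (w i)) (hwv : ∀ i, r (w i) (v i))
    (hch : PairsAscending r u v)
    (h1 : (∀ i j, i < j → r (w i) (u j)) ∨ ∀ i j, i < j → r (u j) (w i))
    (h2 : (∀ i j, i < j → r (u i) (w j)) ∨ ∀ i j, i < j → r (w j) (u i))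
    (h3 : (∀ i j, i < j → r (w i) (v j)) ∨ ∀ i j, i < j → r (v j) (w i))
    (h4 : (∀ i j, i < j → r (v i) (w j)) ∨ ∀ i j, i < j → r (w j) (v i))
    (h5 : (∀ i j, i < j → r (w i) (w j)) ∨ ∀ i j, i < j → r (w j) (w i)) :
    ContainsFrakB r ∨ PairsAscending r u w ∧ PairsAscending r w v := by
  rcases h2 with h2 | h2
  swap
  · exact .inl <| containsFrakB_of_partners_beat_earlier hT (.inl rfl)
      (fun i j h => (hch i j h).1) huw h2 h1 h5
  rcases h3 with h3 | h3
  swap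
  · exact .inl <| containsFrakB_of_ascending_partners hT (fun i j h => (hch i j h).2.2.2) hwv h3
      h4 h5
  rcases h1 with h1 | h1
  swap
  · refine .inl ⟨_, by simp [frakB], vTour_embedsIn omegaLT_trichotomous hT (w 0)
      (fun k => v (k + 1)) (fun k => u (k + 2)) (fun k => (hch _ _ (by omega)).2.2.1)
      (fun i j (hij : i < j) => ⟨(hch _ _ (by omega)).2.2.2, (hch _ _ (by omega)).2.2.1, ?_,
        (hch _ _ (by omega)).1⟩) (fun k => h3 _ _ (by omega)) (fun k => h1 _ _ (by omega))⟩
    rcases (show i + 2 ≤ j + 1 by omega).lt_or_eq with hlt | heq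
    · exact (hch _ _ hlt).2.1
    · exact heq ▸ huv _
  rcases h5 with h5 | h5
  swap
  · exact .inl ⟨_, by simp [frakB], uTour_embedsIn omegaLT_trichotomous hT u w
      (fun i j h => (hch i j h).1) huw h5 h2 h1⟩
  rcases h4 with h4 | h4
  · exact .inr ⟨fun i j hij => ⟨(hch i j hij).1, h2 i j hij, h1 i j hij, h5 i j hij⟩,
      fun i j hij => ⟨h5 i j hij, h3 i j hij, h4 i j hij, (hch i j hij).2.2.2⟩⟩
  · exact .inl ⟨_, by simp [frakB], vTour_embedsIn omegaLT_trichotomous hT (v 0)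
      (fun k => u (k + 1)) (fun k => w (k + 1)) (fun k => huw _)
      (fun i j (hij : i < j) => ⟨(hch _ _ (by omega)).1, h2 _ _ (by omega), h1 _ _ (by omega),
        h5 _ _ (by omega)⟩) (fun k => (hch _ _ (by omega)).2.2.1) (fun k => h4 _ _ (by omega))⟩

theorem containsFrakB_or_exists_pairsAscending (hT : IsTournament r) {u v w : ℕ → V}
    (huv : ∀ i, r (u i) (v i)) (huw : ∀ i, r (u i) (w i)) (hwv : ∀ i, r (w i) (v i))
    (hch : PairsAscending r u v) (hw : Function.Injective w) (hwu_ne : ∀ i j, w i ≠ u j)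
    (hwv_ne : ∀ i j, w i ≠ v j) :
    ContainsFrakB r ∨ ∃ φ : ℕ → ℕ, StrictMono φ ∧
      PairsAscending r (u ∘ φ) (w ∘ φ) ∧ PairsAscending r (w ∘ φ) (v ∘ φ) := by
  obtain ⟨φ, hφ, h⟩ := hT.exists_strictMono_oriented [(w, u), (u, w), (w, v), (v, w), (w, w)]
    (by simpa using ⟨fun i j _ => hwu_ne i j, fun i j _ => (hwu_ne j i).symm,
      fun i j _ => hwv_ne i j, fun i j _ => (hwv_ne j i).symm, fun i j hij => hw.ne hij.ne⟩)
  exact (containsFrakB_or_pairsAscending_of_homogeneous hT (u := u ∘ φ) (v := v ∘ φ)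
    (w := w ∘ φ) (fun _ => huv _) (fun _ => huw _) (fun _ => hwv _) (hch.comp hφ)
    (h (w, u) (by simp)) (h (u, w) (by simp)) (h (w, v) (by simp)) (h (v, w) (by simp))
    (h (w, w) (by simp))).imp_right fun h => ⟨φ, hφ, h⟩

theorem PairsAscending.shift {p q : ℕ → V} (h : PairsAscending r p q)
    (hpq : ∀ i, r (p i) (q i)) : PairsAscending r q fun i => p (i + 1) := by
  refine fun i j hij => ⟨(h i j hij).2.2.2, (h _ _ (by omega)).2.2.1, ?_, (h _ _ (by omega)).1⟩
  rcases (show i + 1 ≤ j by omega).lt_or_eq with hlt | rfl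
  · exact (h _ _ hlt).2.1
  · exact hpq _

theorem containsFrakB_of_separator (hT : IsTournament r) (y : V) {p q : ℕ → V}
    (hpq : ∀ i, r (p i) (q i)) (hch : PairsAscending r p q) (hyp : ∀ i, y ≠ p i)
    (hyq : ∀ i, y ≠ q i) (hsep : ∀ i, ¬ (r (p i) y ↔ r (q i) y)) : ContainsFrakB r := by
  obtain ⟨φ, hφ, hpy | hpy⟩ := exists_strictMono_forall_or_forall_not fun i => r (p i) y
  · have hyq' : ∀ i, r y (q (φ i)) := fun i =>
      hT.rel_of_not_rel (hyq _) fun h => hsep _ (iff_of_true (hpy i) h)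
    exact ⟨_, by simp [frakB], vTour_embedsIn omegaLT_trichotomous hT y (q ∘ φ)
      (fun i => p (φ (i + 1))) (fun i => (hch _ _ (hφ (Nat.lt_succ_self i))).2.2.1)
      ((hch.comp hφ).shift fun _ => hpq _) hyq' fun i => hpy _⟩
  · have hqy : ∀ i, r (q (φ i)) y := fun i =>
      by_contra fun h => hsep _ (iff_of_false (hpy i) h)
    exact ⟨_, by simp [frakB], vTour_embedsIn omegaLT_trichotomous hT y (p ∘ φ) (q ∘ φ)
      (fun _ => hpq _) (hch.comp hφ) (fun i => hT.rel_of_not_rel (hyp _) (hpy i)) hqy⟩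

theorem containsFrakB_or_exists_refinement (hT : IsTournament r) {p q z : ℕ → V}
    (hpq : ∀ i, r (p i) (q i)) (hch : PairsAscending r p q) (hz : Function.Injective z)
    (hzp : ∀ i j, z i ≠ p j) (hzq : ∀ i j, z i ≠ q j)
    (hsep : ∀ i, ¬ (r (p i) (z i) ↔ r (q i) (z i))) :
    ContainsFrakB r ∨ ∃ φ : ℕ → ℕ, StrictMono φ ∧
      (∀ i, r (p (φ i)) (z (φ i)) ∧ r (z (φ i)) (q (φ i))) ∧
      PairsAscending r (p ∘ φ) (z ∘ φ) ∧ PairsAscending r (z ∘ φ) (q ∘ φ) := by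
  obtain ⟨ψ, hψ, hpz | hpz⟩ := exists_strictMono_forall_or_forall_not fun i => r (p i) (z i)
  · have hzq' : ∀ i, r (z (ψ i)) (q (ψ i)) := fun i =>
      hT.rel_of_not_rel (hzq _ _) fun h => hsep _ (iff_of_true (hpz i) h)
    refine (containsFrakB_or_exists_pairsAscending hT (u := p ∘ ψ) (v := q ∘ ψ) (w := z ∘ ψ)
      (fun _ => hpq _) hpz hzq' (hch.comp hψ) (hz.comp hψ.injective) (fun _ _ => hzp _ _)
      (fun _ _ => hzq _ _)).imp_right ?_
    rintro ⟨φ, hφ, h⟩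
    exact ⟨ψ ∘ φ, hψ.comp hφ, fun i => ⟨hpz _, hzq' _⟩, h⟩
  · exact .inl <| containsFrakB_of_cycles hT (u := p ∘ ψ) (v := q ∘ ψ) (w := z ∘ ψ)
      (fun _ => hpq _) (fun i => by_contra fun h => hsep _ (iff_of_false (hpz i) h))
      (fun i => hT.rel_of_not_rel (hzp _ _) (hpz i)) (hch.comp hψ) (hz.comp hψ.injective)
      (fun _ _ => hzp _ _) (fun _ _ => hzq _ _)

end Chains

section AcyclicSets

variable {V : Type u} {r : V → V → Prop}

theorem AcyclicSet.mono {A W : Set V} (hW : AcyclicSet r W) (hA : A ⊆ W) : AcyclicSet r A :=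
  fun ⟨a, ha, b, hb, c, hc, h⟩ => hW ⟨a, hA ha, b, hA hb, c, hA hc, h⟩

theorem AcyclicSet.flip {W : Set V} (hW : AcyclicSet r W) : AcyclicSet (flip r) W :=
  fun ⟨a, ha, b, hb, c, hc, hab, hbc, hca⟩ => hW ⟨a, ha, c, hc, b, hb, hca, hbc, hab⟩

theorem AcyclicallyIndecomposable.exists_separator (hAI : AcyclicallyIndecomposable r)
    {A : Set V} (hA : AcyclicSet r A) {a b : V} (ha : a ∈ A) (hb : b ∈ A) (hab : a ≠ b) :
    ∃ y ∉ A, ∃ x ∈ A, ∃ x' ∈ A, ¬ (r x y ↔ r x' y) := by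
  by_contra h
  refine hab (hAI A (fun x hx x' hx' y hy => ?_) hA ha hb)
  by_contra hxy
  exact h ⟨y, hy, x, hx, x', hx', hxy⟩

/-- The closed interval from `a` to `b` of the linear order induced on an acyclic set `W`. -/
def interval (r : V → V → Prop) (W : Set V) (a b : V) : Set V :=
  {x ∈ W | (x = a ∨ r a x) ∧ (x = b ∨ r x b)}

theorem left_mem_interval {W : Set V} {a b : V} (ha : a ∈ W) (hab : r a b) :
    a ∈ interval r W a b :=
  ⟨ha, .inl rfl, .inr hab⟩

theorem right_mem_interval {W : Set V} {a b : V} (hb : b ∈ W) (hab : r a b) :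
    b ∈ interval r W a b :=
  ⟨hb, .inr hab, .inl rfl⟩

theorem AcyclicSet.rel_of_mem_interval_of_rel (hT : IsTournament r) {W : Set V}
    (hW : AcyclicSet r W) {a b x y : V} (hb : b ∈ W) (hy : y ∈ W) (hx : x ∈ interval r W a b)
    (hby : r b y) : r x y :=
  hx.2.2.elim (fun e => e ▸ hby) fun hxb => hW.rel_trans hT hx.1 hb hy hxb hby

theorem AcyclicSet.rel_of_rel_of_mem_interval (hT : IsTournament r) {W : Set V}
    (hW : AcyclicSet r W) {a b x y : V} (ha : a ∈ W) (hy : y ∈ W) (hx : x ∈ interval r W a b)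
    (hya : r y a) : r y x :=
  hx.2.1.elim (fun e => e ▸ hya) fun hax => hW.rel_trans hT hy ha hx.1 hya hax

theorem AcyclicSet.rel_iff_of_notMem_interval (hT : IsTournament r) {W : Set V}
    (hW : AcyclicSet r W) {a b x x' y : V} (ha : a ∈ W) (hb : b ∈ W) (hy : y ∈ W)
    (hyI : y ∉ interval r W a b) (hx : x ∈ interval r W a b) (hx' : x' ∈ interval r W a b) :
    r x y ↔ r x' y := by
  by_cases hay : y = a ∨ r a y
  · have hby : r b y := by
      refine hT.rel_of_not_rel (fun e => hyI ⟨hy, hay, .inl e.symm⟩) fun hyb => ?_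
      exact hyI ⟨hy, hay, .inr hyb⟩
    exact iff_of_true (hW.rel_of_mem_interval_of_rel hT hb hy hx hby)
      (hW.rel_of_mem_interval_of_rel hT hb hy hx' hby)
  · rw [not_or] at hay
    have hya : r y a := hT.rel_of_not_rel hay.1 hay.2
    exact iff_of_false (hT.asymm (hW.rel_of_rel_of_mem_interval hT ha hy hx hya))
      (hT.asymm (hW.rel_of_rel_of_mem_interval hT ha hy hx' hya))

/-- The separators come from acyclic indecomposability applied to the intervals
`[d (2k), d (2k+1)]` of `W`. -/
theorem exists_separated_pairs (hT : IsTournament r) (hAI : AcyclicallyIndecomposable r)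
    {W : Set V} (hW : AcyclicSet r W) {d : ℕ → V} (hd : ∀ i j, i < j → r (d i) (d j))
    (hdW : ∀ i, d i ∈ W) :
    ∃ p q y : ℕ → V, (∀ i, p i ∈ W) ∧ (∀ i, q i ∈ W) ∧ (∀ i, y i ∉ W) ∧
      (∀ i, r (p i) (q i)) ∧ PairsAscending r p q ∧ ∀ i, ¬ (r (p i) (y i) ↔ r (q i) (y i)) := by
  set I : ℕ → Set V := fun k => interval r W (d (2 * k)) (d (2 * k + 1))
  have hd' : ∀ k, r (d (2 * k)) (d (2 * k + 1)) := fun k => hd _ _ (by omega)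
  have hsep : ∀ k, ∃ y ∉ I k, ∃ x ∈ I k, ∃ x' ∈ I k, ¬ (r x y ↔ r x' y) := fun k =>
    hAI.exists_separator (hW.mono fun _ hx => hx.1) (left_mem_interval (hdW _) (hd' k))
      (right_mem_interval (hdW _) (hd' k)) (hT.ne_of_rel (hd' k))
  choose y hyI x hx x' hx' hsep using hsep
  have hyW : ∀ k, y k ∉ W := fun k hyW =>
    hsep k (hW.rel_iff_of_notMem_interval hT (hdW _) (hdW _) hyW (hyI k) (hx k) (hx' k))
  have hcross : ∀ i j, i < j → ∀ z ∈ I i, ∀ z' ∈ I j, r z z' := fun i j hij z hz z' hz' =>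
    hW.rel_of_rel_of_mem_interval hT (hdW _) hz.1 hz'
      (hW.rel_of_mem_interval_of_rel hT (hdW _) (hdW _) hz (hd _ _ (by omega)))
  have horient : ∀ k, ∃ p ∈ I k, ∃ q ∈ I k, r p q ∧ ¬ (r p (y k) ↔ r q (y k)) := fun k => by
    by_cases h : r (x k) (x' k)
    · exact ⟨_, hx k, _, hx' k, h, hsep k⟩
    · have hne : x' k ≠ x k := fun e => hsep k (e ▸ Iff.rfl)
      exact ⟨_, hx' k, _, hx k, hT.rel_of_not_rel hne h, fun e => hsep k e.symm⟩
  choose p hp q hq hpq hsep' using horient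
  exact ⟨p, q, y, fun k => (hp k).1, fun k => (hq k).1, hyW, hpq, fun i j hij =>
    ⟨hcross i j hij _ (hp i) _ (hp j), hcross i j hij _ (hp i) _ (hq j),
      hcross i j hij _ (hq i) _ (hp j), hcross i j hij _ (hq i) _ (hq j)⟩, hsep'⟩

theorem containsFrakB_or_exists_refined_chain (hT : IsTournament r)
    (hAI : AcyclicallyIndecomposable r) {W : Set V} (hW : AcyclicSet r W) {d : ℕ → V}
    (hd : ∀ i j, i < j → r (d i) (d j)) (hdW : ∀ i, d i ∈ W) :
    ContainsFrakB r ∨ ∃ p q s : ℕ → V, (∀ i, p i ∈ W) ∧ (∀ i, q i ∈ W) ∧ (∀ i, s i ∉ W) ∧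
      Function.Injective s ∧ (∀ i, r (p i) (s i) ∧ r (s i) (q i)) ∧
      PairsAscending r p s ∧ PairsAscending r s q := by
  obtain ⟨p, q, y, hp, hq, hy, hpq, hch, hsep⟩ := exists_separated_pairs hT hAI hW hd hdW
  obtain ⟨ρ, hρ, hyρ⟩ := exists_strictMono_homogeneous [fun i j => y i = y j]
  rcases hyρ _ (List.mem_singleton_self _) with hyρ | hyρ
  · have hconst : ∀ i, y (ρ i) = y (ρ 0) := fun i =>
      i.eq_zero_or_pos.elim (fun h => h ▸ rfl) fun h => (hyρ 0 i h).symm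
    refine .inl <| containsFrakB_of_separator hT (y (ρ 0)) (p := p ∘ ρ) (q := q ∘ ρ)
      (fun _ => hpq _) (hch.comp hρ) (fun i (e : _ = p (ρ i)) => hy _ (e ▸ hp _))
      (fun i (e : _ = q (ρ i)) => hy _ (e ▸ hq _)) fun i => ?_
    simpa only [Function.comp, ← hconst i] using hsep (ρ i)
  refine (containsFrakB_or_exists_refinement hT (p := p ∘ ρ) (q := q ∘ ρ) (z := y ∘ ρ)
    (fun _ => hpq _) (hch.comp hρ) (Function.Injective.of_lt_imp_ne hyρ)
    (fun i j (e : y (ρ i) = p (ρ j)) => hy _ (e ▸ hp _))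
    (fun i j (e : y (ρ i) = q (ρ j)) => hy _ (e ▸ hq _)) fun _ => hsep _).imp_right ?_
  rintro ⟨φ, hφ, hins, hps, hsq⟩
  exact ⟨_, _, _, fun _ => hp _, fun _ => hq _, fun _ => hy _,
    (Function.Injective.of_lt_imp_ne hyρ).comp hφ.injective, hins, hps, hsq⟩

end AcyclicSets

section Cycles

variable {V : Type u} {r : V → V → Prop}

theorem AcyclicSet.pairsAscending (hT : IsTournament r) {W : Set V} (hW : AcyclicSet r W)
    {b c : ℕ → V} (hb : ∀ i, b i ∈ W) (hc : ∀ i, c i ∈ W) (hbc : ∀ i, r (b i) (c i))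
    (hcb : ∀ i j, i < j → r (c i) (b j)) : PairsAscending r b c := fun i j hij =>
  have hbb : r (b i) (b j) := hW.rel_trans hT (hb i) (hc i) (hb j) (hbc i) (hcb i j hij)
  ⟨hbb, hW.rel_trans hT (hb i) (hb j) (hc j) hbb (hbc j), hcb i j hij,
    hW.rel_trans hT (hc i) (hb j) (hc j) (hcb i j hij) (hbc j)⟩

theorem IsTournament.exists_strictMono_sorted_or_crossing (hT : IsTournament r) {b c : ℕ → V}
    (hbc : ∀ i, r (b i) (c i)) : ∃ φ : ℕ → ℕ, StrictMono φ ∧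
      ((∀ i j, i < j → r (c (φ i)) (b (φ j))) ∨ (∀ i j, i < j → r (c (φ j)) (b (φ i))) ∨
        ∀ i j, r (b (φ i)) (c (φ j))) := by
  obtain ⟨φ, hφ, h⟩ := exists_strictMono_homogeneous [fun i j => r (c i) (b j),
    fun i j => r (c j) (b i), fun i j => b i = c j, fun i j => b j = c i]
  refine ⟨φ, hφ, ?_⟩
  rcases h (fun i j => r (c i) (b j)) (by simp) with h1 | h1
  · exact .inl h1
  rcases h (fun i j => r (c j) (b i)) (by simp) with h2 | h2
  · exact .inr (.inl h2)
  -- An edge `b i → c i` would otherwise become a loop.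
  have h3 : ∀ i j, i < j → b (φ i) ≠ c (φ j) := by
    refine (h (fun i j => b i = c j) (by simp)).resolve_left fun h3 => hT.1 (c (φ 1)) ?_
    have h := hbc (φ 1)
    rwa [h3 1 2 (by omega), ← h3 0 2 (by omega), h3 0 1 (by omega)] at h
  have h4 : ∀ i j, i < j → b (φ j) ≠ c (φ i) := by
    refine (h (fun i j => b j = c i) (by simp)).resolve_left fun h4 => hT.1 (c (φ 1)) ?_
    have h := hbc (φ 1)
    rwa [h4 0 1 (by omega), ← h4 0 2 (by omega), h4 1 2 (by omega)] at h
  refine .inr (.inr fun i j => ?_)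
  rcases lt_trichotomy i j with hij | rfl | hij
  · exact hT.rel_of_not_rel (h3 i j hij) (h2 i j hij)
  · exact hbc _
  · exact hT.rel_of_not_rel (h4 j i hij) (h1 j i hij)

theorem containsFrakB_or_descending_of_exists_not_rel (hT : IsTournament r) {t c : ℕ → V}
    (ht : Function.Injective t) (htc : ∀ i j, t i ≠ c j) (hct : ∀ k, r (c k) (t k))
    (hc₁ : (∀ i j, i < j → r (c i) (c j)) ∨ ∀ i j, i < j → ¬ r (c i) (c j))
    (hc₂ : (∀ i j, i < j → r (c j) (c i)) ∨ ∀ i j, i < j → ¬ r (c j) (c i))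
    (hQ₁ : (∀ i j, i < j → r (t i) (c j)) ∨ ∀ i j, i < j → r (c j) (t i))
    (hQ₂ : (∀ i j, i < j → r (c i) (t j)) ∨ ∀ i j, i < j → r (t j) (c i))
    (hS : (∀ i j, i < j → r (t i) (t j)) ∨ ∀ i j, i < j → r (t j) (t i))
    (hk : ∃ k, ¬ r (c 0) (t k)) :
    ContainsFrakB r ∨ (∀ i j, i < j → r (c j) (c i)) ∧ (∀ i j, i < j → r (c j) (t i)) ∧
      (∀ i j, i < j → r (t j) (c i)) ∧ ∀ i j, i < j → r (t j) (t i) := by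
  obtain ⟨k, hk⟩ := hk
  have hk₀ : 0 < k := Nat.pos_of_ne_zero fun h => hk (h ▸ hct 0)
  have hQ₂ : ∀ i j, i < j → r (t j) (c i) := hQ₂.resolve_left fun h => hk (h 0 k hk₀)
  have hodd : Function.Injective fun g => t (2 * g + 1) := ht.comp fun _ _ h => by omega
  have heven : Function.Injective fun g => t (2 * g) := ht.comp fun _ _ h => by omega
  rcases hc₁ with hc | hc₁
  · exact .inl <| containsFrakB_of_cycles hT (u := fun g => c (2 * g)) (v := fun g => c (2 * g + 1))
      (fun _ => hc _ _ (by omega)) (fun _ => hct _) (fun _ => hQ₂ _ _ (by omega))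
      (pairsAscending_even_odd hc) hodd (fun _ _ => htc _ _) (fun _ _ => htc _ _)
  rcases hc₂ with hc | hc₂
  swap
  · exact absurd ((hT.eq_of_not_rel_of_not_rel (hc₁ 0 k hk₀) (hc₂ 0 k hk₀)) ▸ hct k) hk
  rcases hQ₁ with hQ₁ | hQ₁
  · exact .inl <| containsFrakB_of_cycles_of_descending hT (u := fun g => c (2 * g + 1))
      (v := fun g => c (2 * g)) (fun _ => hc _ _ (by omega)) (fun _ => hct _)
      (fun _ => hQ₁ _ _ (by omega)) (pairsAscending_even_odd (r := flip r) hc).swap heven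
      (fun _ _ => htc _ _) (fun _ _ => htc _ _)
  rcases hS with hS | hS
  · exact .inl ⟨_, by simp [frakB], uTour_embedsIn omegaStarLT_trichotomous hT c t
      (fun a b h => hc b a h) hct (fun a b h => hS b a h) (fun a b h => hQ₁ b a h)
      (fun a b h => hQ₂ b a h)⟩
  · exact .inr ⟨hc, hQ₁, hQ₂, hS⟩

theorem containsFrakB_or_ascending_of_exists_not_rel (hT : IsTournament r) {t b : ℕ → V}
    (ht : Function.Injective t) (htb : ∀ i j, t i ≠ b j) (htb' : ∀ k, r (t k) (b k))
    (hb₁ : (∀ i j, i < j → r (b i) (b j)) ∨ ∀ i j, i < j → ¬ r (b i) (b j))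
    (hb₂ : (∀ i j, i < j → r (b j) (b i)) ∨ ∀ i j, i < j → ¬ r (b j) (b i))
    (hP₁ : (∀ i j, i < j → r (t i) (b j)) ∨ ∀ i j, i < j → r (b j) (t i))
    (hP₂ : (∀ i j, i < j → r (b i) (t j)) ∨ ∀ i j, i < j → r (t j) (b i))
    (hS : (∀ i j, i < j → r (t i) (t j)) ∨ ∀ i j, i < j → r (t j) (t i))
    (hk : ∃ k, ¬ r (t k) (b 0)) :
    ContainsFrakB r ∨ (∀ i j, i < j → r (b i) (b j)) ∧ (∀ i j, i < j → r (t i) (b j)) ∧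
      (∀ i j, i < j → r (b i) (t j)) ∧ ∀ i j, i < j → r (t i) (t j) :=
  (containsFrakB_or_descending_of_exists_not_rel hT.flip ht htb htb' hb₂ hb₁ hP₁.symm hP₂.symm
    hS.symm hk).imp_left (.of_flip hT)

theorem containsFrakB_or_exists_apexes_of_crossing (hT : IsTournament r) {t b c : ℕ → V}
    (ht : Function.Injective t) (htb : ∀ i j, t i ≠ b j) (htc : ∀ i j, t i ≠ c j)
    (hbc : ∀ i j, r (b i) (c j)) (hct : ∀ k, r (c k) (t k)) (htb' : ∀ k, r (t k) (b k)) :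
    ContainsFrakB r ∨ ∃ φ : ℕ → ℕ, StrictMono φ ∧ ∃ i j, ∀ k, r (t (φ k)) (b i) ∧
      r (c j) (t (φ k)) := by
  obtain ⟨φ, hφ, h⟩ := exists_strictMono_homogeneous [fun i j => r (b i) (b j),
    fun i j => r (b j) (b i), fun i j => r (c i) (c j), fun i j => r (c j) (c i),
    fun i j => r (t i) (b j), fun i j => r (b i) (t j), fun i j => r (t i) (c j),
    fun i j => r (c i) (t j), fun i j => r (t i) (t j)]
  have htφ : Function.Injective (t ∘ φ) := ht.comp hφ.injective
  have hP₁ := hT.orient (x := t ∘ φ) (y := b ∘ φ) (fun _ _ _ => htb _ _)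
    (h (fun i j => r (t i) (b j)) (by simp))
  have hP₂ := hT.orient (x := b ∘ φ) (y := t ∘ φ) (fun _ _ _ => (htb _ _).symm)
    (h (fun i j => r (b i) (t j)) (by simp))
  have hQ₁ := hT.orient (x := t ∘ φ) (y := c ∘ φ) (fun _ _ _ => htc _ _)
    (h (fun i j => r (t i) (c j)) (by simp))
  have hQ₂ := hT.orient (x := c ∘ φ) (y := t ∘ φ) (fun _ _ _ => (htc _ _).symm)
    (h (fun i j => r (c i) (t j)) (by simp))
  have hS := hT.orient (x := t ∘ φ) (y := t ∘ φ) (fun _ _ hij => htφ.ne hij.ne)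
    (h (fun i j => r (t i) (t j)) (by simp))
  have hdesc := fun hk => containsFrakB_or_descending_of_exists_not_rel hT htφ
    (fun _ _ => htc _ _) (fun _ => hct _) (h (fun i j => r (c i) (c j)) (by simp))
    (h (fun i j => r (c j) (c i)) (by simp)) hQ₁ hQ₂ hS hk
  have hasc := fun hk => containsFrakB_or_ascending_of_exists_not_rel hT htφ
    (fun _ _ => htb _ _) (fun _ => htb' _) (h (fun i j => r (b i) (b j)) (by simp))
    (h (fun i j => r (b j) (b i)) (by simp)) hP₁ hP₂ hS hk
  by_cases hEC : ∀ k, r (c (φ 0)) (t (φ k))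
  · by_cases hEB : ∀ k, r (t (φ k)) (b (φ 0))
    · exact .inr ⟨φ, hφ, φ 0, φ 0, fun k => ⟨hEB k, hEC k⟩⟩
    obtain h | ⟨hb, hP₁, hP₂, hS⟩ := hasc (not_forall.mp hEB)
    · exact .inl h
    exact .inl ⟨_, by simp [frakB], vTour_embedsIn omegaLT_trichotomous hT (c (φ 0)) (t ∘ φ)
      (b ∘ φ) (fun _ => htb' _) (fun i j hij => ⟨hS i j hij, hP₁ i j hij, hP₂ i j hij, hb i j hij⟩)
      hEC fun _ => hbc _ _⟩
  obtain h | ⟨hc, hQ₁, hQ₂, hS⟩ := hdesc (not_forall.mp hEC)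
  · exact .inl h
  by_cases hEB : ∀ k, r (t (φ k)) (b (φ 0))
  · exact .inl ⟨_, by simp [frakB], vTour_embedsIn omegaStarLT_trichotomous hT (b (φ 0)) (c ∘ φ)
      (t ∘ φ) (fun _ => hct _) (fun i j hij => ⟨hc j i hij, hQ₁ j i hij, hQ₂ j i hij, hS j i hij⟩)
      (fun _ => hbc _ _) hEB⟩
  obtain h | ⟨-, -, -, hS'⟩ := hasc (not_forall.mp hEB)
  · exact .inl h
  · exact absurd (hS 0 1 one_pos) (hT.asymm (hS' 0 1 one_pos))

theorem containsFrakB_or_exists_apexes (hT : IsTournament r) {W : Set V} (hW : AcyclicSet r W)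
    {t b c : ℕ → V} (ht : Function.Injective t) (htW : ∀ k, t k ∉ W) (hb : ∀ k, b k ∈ W)
    (hc : ∀ k, c k ∈ W) (hbc : ∀ k, r (b k) (c k)) (hct : ∀ k, r (c k) (t k))
    (htb : ∀ k, r (t k) (b k)) :
    ContainsFrakB r ∨ ∃ β ∈ W, ∃ γ ∈ W, r β γ ∧ ∃ φ : ℕ → ℕ, StrictMono φ ∧
      ∀ k, r (t (φ k)) β ∧ r γ (t (φ k)) := by
  have htb_ne : ∀ i j, t i ≠ b j := fun i j e => htW i (e ▸ hb j)
  have htc_ne : ∀ i j, t i ≠ c j := fun i j e => htW i (e ▸ hc j)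
  obtain ⟨φ, hφ, hasc | hdesc | hcross⟩ := hT.exists_strictMono_sorted_or_crossing hbc
  · exact .inl <| containsFrakB_of_cycles hT (w := t ∘ φ) (fun _ => hbc _) (fun _ => hct _)
      (fun _ => htb _) (hW.pairsAscending hT (fun _ => hb _) (fun _ => hc _) (fun _ => hbc _) hasc)
      (ht.comp hφ.injective) (fun _ _ => htb_ne _ _) (fun _ _ => htc_ne _ _)
  · exact .inl <| containsFrakB_of_cycles_of_descending hT (w := t ∘ φ) (fun _ => hbc _)
      (fun _ => hct _) (fun _ => htb _) (hW.flip.pairsAscending hT.flip (fun _ => hc _)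
        (fun _ => hb _) (fun _ => hbc _) hdesc).swap
      (ht.comp hφ.injective) (fun _ _ => htb_ne _ _) (fun _ _ => htc_ne _ _)
  refine (containsFrakB_or_exists_apexes_of_crossing hT (t := t ∘ φ) (b := b ∘ φ) (c := c ∘ φ)
    (ht.comp hφ.injective) (fun _ _ => htb_ne _ _) (fun _ _ => htc_ne _ _) (fun _ _ => hcross _ _)
    (fun _ => hct _) (fun _ => htb _)).imp_right ?_
  rintro ⟨ψ, hψ, i, j, h⟩
  exact ⟨_, hb _, _, hc _, hcross i j, φ ∘ ψ, hφ.comp hψ, h⟩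

end Cycles

section Main

variable {V : Type u} {r : V → V → Prop}

theorem exists_maximal_acyclicSet {G W₀ : Set V} (hW₀G : W₀ ⊆ G) (hW₀ : AcyclicSet r W₀) :
    ∃ W, W₀ ⊆ W ∧ W ⊆ G ∧ AcyclicSet r W ∧ ∀ s ∈ G, s ∉ W → ¬ AcyclicSet r (insert s W) := by
  have hchain : ∀ C ⊆ {W | W ⊆ G ∧ AcyclicSet r W}, IsChain (· ⊆ ·) C → AcyclicSet r (⋃₀ C) := by
    rintro C hC hchain ⟨a, ⟨A, hA, ha⟩, b, ⟨B, hB, hb⟩, c, ⟨D, hD, hc⟩, hcyc⟩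
    obtain ⟨E, hE, hAE, hBE⟩ := hchain.directedOn A hA B hB
    obtain ⟨F, hF, hEF, hDF⟩ := hchain.directedOn E hE D hD
    exact (hC hF).2 ⟨a, hEF (hAE ha), b, hEF (hBE hb), c, hDF hc, hcyc⟩
  obtain ⟨W, hW₀W, hWmax⟩ := zorn_subset_nonempty {W | W ⊆ G ∧ AcyclicSet r W}
    (fun C hC hC' _ => ⟨⋃₀ C, ⟨Set.sUnion_subset fun W hW => (hC hW).1, hchain C hC hC'⟩,
      fun _ => Set.subset_sUnion_of_mem⟩) W₀ ⟨hW₀G, hW₀⟩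
  refine ⟨W, hW₀W, hWmax.1.1, hWmax.1.2, fun s hsG hsW hs => hsW ?_⟩
  exact hWmax.2 ⟨Set.insert_subset hsG hWmax.1.1, hs⟩ (Set.subset_insert s W) (Set.mem_insert s W)

theorem AcyclicSet.exists_cycle_of_insert (hT : IsTournament r) {W : Set V}
    (hW : AcyclicSet r W) {s : V} (hs : ¬ AcyclicSet r (insert s W)) :
    ∃ b ∈ W, ∃ c ∈ W, r b c ∧ r c s ∧ r s b := by
  obtain ⟨a, ha, b, hb, c, hc, hab, hbc, hca⟩ := not_not.mp hs
  rcases ha with rfl | ha <;> rcases hb with rfl | hb <;> rcases hc with rfl | hc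
  · exact absurd hab (hT.1 _)
  · exact absurd hab (hT.1 _)
  · exact absurd hca (hT.1 _)
  · exact ⟨b, hb, c, hc, hbc, hca, hab⟩
  · exact absurd hbc (hT.1 _)
  · exact ⟨c, hc, a, ha, hca, hab, hbc⟩
  · exact ⟨a, ha, b, hb, hab, hbc, hca⟩
  · exact absurd ⟨a, ha, b, hb, c, hc, hab, hbc, hca⟩ hW

theorem lt_of_rel_of_ascending (hT : IsTournament r) {d : ℕ → V}
    (hd : ∀ i j, i < j → r (d i) (d j)) {i j : ℕ} (h : r (d i) (d j)) : i < j := by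
  rcases lt_trichotomy i j with hij | rfl | hij
  · exact hij
  · exact absurd h (hT.1 _)
  · exact absurd h (hT.asymm (hd j i hij))

theorem acyclicSet_range_of_ascending (hT : IsTournament r) {d : ℕ → V}
    (hd : ∀ i j, i < j → r (d i) (d j)) : AcyclicSet r (Set.range d) := by
  rintro ⟨_, ⟨i, rfl⟩, _, ⟨j, rfl⟩, _, ⟨k, rfl⟩, hij, hjk, hki⟩
  have := lt_of_rel_of_ascending hT hd hij
  have := lt_of_rel_of_ascending hT hd hjk
  have := lt_of_rel_of_ascending hT hd hki
  omega

/-- The vertices closing a three-cycle with every edge `(β, γ)` of `L`. -/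
def apexSet (r : V → V → Prop) (L : List (V × V)) : Set V :=
  {x | ∀ e ∈ L, r x e.1 ∧ r e.2 x}

theorem mem_apexSet_cons {e : V × V} {L : List (V × V)} {x : V} :
    x ∈ apexSet r (e :: L) ↔ (r x e.1 ∧ r e.2 x) ∧ x ∈ apexSet r L :=
  List.forall_mem_cons

theorem apexSet_flip (L : List (V × V)) : apexSet (flip r) (L.map Prod.swap) = apexSet r L := by
  ext x
  simp only [apexSet, Set.mem_ofPred_eq, List.forall_mem_map, Prod.fst_swap, Prod.snd_swap, flip,
    and_comm]

/-- Pigeonholing the edge of `L` with which each `s i` fails to close a three-cycle gives `V[ω]`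
with apex an endpoint of that edge. -/
theorem containsFrakB_of_forall_notMem_apexSet (hT : IsTournament r) {L : List (V × V)}
    {W : Set V} (hWL : W ⊆ apexSet r L) {p q s : ℕ → V} (hp : ∀ i, p i ∈ W) (hq : ∀ i, q i ∈ W)
    (hins : ∀ i, r (p i) (s i) ∧ r (s i) (q i)) (hps : PairsAscending r p s)
    (hsq : PairsAscending r s q) (hs : ∀ i, s i ∉ apexSet r L) : ContainsFrakB r := by
  classical
  have hmiss : ∀ i, ∃ e ∈ L, ¬ (r (s i) e.1 ∧ r e.2 (s i)) := fun i => by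
    simpa [apexSet] using hs i
  choose e he hmiss using hmiss
  obtain ⟨⟨e₀, he₀⟩, φ, hφ, he₀'⟩ :=
    exists_strictMono_const fun i => (⟨e i, he i⟩ : {e // e ∈ L})
  have hmiss₀ : ∀ i, ¬ (r (s (φ i)) e₀.1 ∧ r e₀.2 (s (φ i))) := fun i => by
    simpa [show e (φ i) = e₀ from congrArg Subtype.val (he₀' i)] using hmiss (φ i)
  obtain ⟨ψ, hψ, h | h⟩ := exists_strictMono_forall_or_forall_not fun i => r (s (φ i)) e₀.1
  · have hs₂ : ∀ i, r (s (φ (ψ i))) e₀.2 := fun i => by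
      refine hT.rel_of_not_rel (fun he => ?_) fun h' => hmiss₀ _ ⟨h i, h'⟩
      exact hT.asymm ((hWL (hp _) e₀ he₀).2) (he ▸ (hins _).1)
    exact ⟨_, by simp [frakB], vTour_embedsIn omegaLT_trichotomous hT e₀.2 (p ∘ φ ∘ ψ)
      (s ∘ φ ∘ ψ) (fun _ => (hins _).1) (hps.comp (hφ.comp hψ)) (fun _ => (hWL (hp _) e₀ he₀).2)
      hs₂⟩
  · have hs₁ : ∀ i, r e₀.1 (s (φ (ψ i))) := fun i => by
      refine hT.rel_of_not_rel (fun he => ?_) (h i)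
      exact hT.asymm ((hWL (hq _) e₀ he₀).1) (he ▸ (hins _).2)
    exact ⟨_, by simp [frakB], vTour_embedsIn omegaLT_trichotomous hT e₀.1 (s ∘ φ ∘ ψ)
      (q ∘ φ ∘ ψ) (fun _ => (hins _).2) (hsq.comp (hφ.comp hψ)) hs₁
      fun _ => (hWL (hq _) e₀ he₀).1⟩

theorem exists_edge_apexSet_infinite_of_ascending (hT : IsTournament r)
    (hAI : AcyclicallyIndecomposable r) (hr : ¬ ContainsFrakB r) {L : List (V × V)}
    {d : ℕ → V} (hd : ∀ i j, i < j → r (d i) (d j)) (hdL : ∀ i, d i ∈ apexSet r L) :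
    ∃ β ∈ apexSet r L, ∃ γ ∈ apexSet r L, r β γ ∧ (apexSet r ((β, γ) :: L)).Infinite := by
  obtain ⟨W, hdW, hWL, hW, hWmax⟩ := exists_maximal_acyclicSet (G := apexSet r L)
    (Set.range_subset_iff.mpr hdL) (acyclicSet_range_of_ascending hT hd)
  obtain h | ⟨p, q, s, hp, hq, hsW, hs, hins, hps, hsq⟩ :=
    containsFrakB_or_exists_refined_chain hT hAI hW hd fun i => hdW ⟨i, rfl⟩
  · exact absurd h hr
  obtain ⟨ψ, hψ, hin | hout⟩ := exists_strictMono_forall_or_forall_not fun i => s i ∈ apexSet r L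
  swap
  · exact absurd (containsFrakB_of_forall_notMem_apexSet hT hWL (p := p ∘ ψ) (q := q ∘ ψ)
      (fun _ => hp _) (fun _ => hq _) (fun _ => hins _) (hps.comp hψ) (hsq.comp hψ) hout) hr
  -- By maximality of `W`, each `s (ψ i)` closes a three-cycle with an edge of `W`.
  choose b hb c hc hbc hcs hsb using fun i =>
    hW.exists_cycle_of_insert hT (hWmax _ (hin i) (hsW (ψ i)))
  obtain h | ⟨β, hβ, γ, hγ, hβγ, φ, hφ, hapex⟩ := containsFrakB_or_exists_apexes hT hW
    (t := s ∘ ψ) (hs.comp hψ.injective) (fun _ => hsW _) hb hc hbc hcs hsb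
  · exact absurd h hr
  refine ⟨β, hWL hβ, γ, hWL hγ, hβγ, (Set.infinite_range_of_injective
    ((hs.comp hψ.injective).comp hφ.injective)).mono ?_⟩
  rintro _ ⟨k, rfl⟩
  exact mem_apexSet_cons.mpr ⟨hapex k, hin _⟩

theorem exists_edge_apexSet_infinite (hT : IsTournament r) (hAI : AcyclicallyIndecomposable r)
    (hr : ¬ ContainsFrakB r) {L : List (V × V)} (hL : (apexSet r L).Infinite) :
    ∃ β ∈ apexSet r L, ∃ γ ∈ apexSet r L, r β γ ∧ (apexSet r ((β, γ) :: L)).Infinite := by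
  set x : ℕ → V := fun n => hL.natEmbedding _ n
  have hx : Function.Injective x := Subtype.val_injective.comp (hL.natEmbedding _).injective
  obtain ⟨φ, hφ, h⟩ :=
    hT.exists_strictMono_oriented [(x, x)] (by simpa using fun i j h => hx.ne h.ne)
  rcases h (x, x) (by simp) with hasc | hdesc
  · exact exists_edge_apexSet_infinite_of_ascending hT hAI hr hasc fun _ => (hL.natEmbedding _ _).2
  obtain ⟨β, hβ, γ, hγ, hβγ, hinf⟩ := exists_edge_apexSet_infinite_of_ascending hT.flip
    (hAI.flip hT) (fun h => hr (h.of_flip hT)) (L := L.map Prod.swap) hdesc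
    fun _ => (apexSet_flip L).symm ▸ (hL.natEmbedding _ _).2
  rw [apexSet_flip] at hβ hγ
  refine ⟨γ, hγ, β, hβ, hβγ, ?_⟩
  rwa [show (β, γ) :: L.map Prod.swap = ((γ, β) :: L).map Prod.swap from rfl, apexSet_flip] at hinf

end Main

/-- Every infinite acyclically indecomposable tournament contains a
subtournament isomorphic to a member of `𝔅`. -/
theorem morphology {V : Type u} (r : V → V → Prop) (hT : IsTournament r)
    (hInf : Infinite V) (hAI : AcyclicallyIndecomposable r) :
    ∃ S ∈ frakB, S.EmbedsIn r := by
  by_contra hr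
  choose β hβ γ hγ hβγ hinf using fun L : {L : List (V × V) // (apexSet r L).Infinite} =>
    exists_edge_apexSet_infinite hT hAI hr L.2
  let F : ℕ → {L : List (V × V) // (apexSet r L).Infinite} := fun n =>
    (fun L => ⟨(β L, γ L) :: L.1, hinf L⟩)^[n]
      ⟨[], by simpa [apexSet] using Set.infinite_univ_iff.mpr hInf⟩
  have hF : ∀ n, (F (n + 1)).1 = (β (F n), γ (F n)) :: (F n).1 := fun n => by
    simp only [F, Function.iterate_succ_apply']
  -- The edge added at step `n` closes a three-cycle with every earlier edge, so the edges form
  -- `K[ω*]`.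
  have hmem : ∀ m n, m < n → (β (F m), γ (F m)) ∈ (F n).1 := by
    intro m n hmn
    induction n, hmn using Nat.le_induction with
    | base => rw [hF]; exact List.mem_cons_self
    | succ n _ ih => rw [hF]; exact List.mem_cons_of_mem _ ih
  exact hr ⟨_, by simp [frakB], kTour_embedsIn omegaStarLT_trichotomous hT (fun n => β (F n))
    (fun n => γ (F n)) (fun a b h => (hβ _ _ (hmem b a h)).1) (fun n => hβγ _)
    (fun a b h => (hγ _ _ (hmem b a h)).2) (fun a b h => (hβ _ _ (hmem b a h)).2)
    (fun a b h => (hγ _ _ (hmem b a h)).1)⟩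
end

section
/- For every tournament T in 𝔅 there exist a real a > 0 and a real c > 1 such that φ_T(n) ≥ a·cⁿ for all natural numbers n. -/
universe u v

/-!
Isomorphic subtournaments have the same multiset of scores (out-degrees), so it suffices to find,
for `8 k < n`, `2 ^ k` subsets of size `n` with pairwise distinct score multisets. Every subset used
lies over finitely many columns, and both `ω` and `ω*` contain every finite chain in either
orientation, so the scores may be computed in whichever of the two is convenient.

For a `k`-subset `S` of `{0, …, 2k - 1}` take one full row over `m` columns and the vertices over
`S` in the other rows (plus the extra vertex for `V[C]`). The scores below a suitable threshold are then
exactly `g_S 0, …, g_S (J - 1)` for a monotone function `g_S` of the column, for instance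
`j + [j ∈ S]` for `H` and `K`. A monotone sequence is recovered from the multiset of its values, and
`g_S` determines `S`. For `C3` and `V` all vertices of a column have the same score and `g_S` is
strictly monotone, so the set of scores suffices. Choosing one element from each pair `{2i, 2i+1}`
gives `2 ^ k` such sets `S`.
-/

open Finset
open Function (Embedding)

section Scores

variable {V : Type u} {W : Type v}

theorem inducedIso_equivalence (r : V → V → Prop) : Equivalence (InducedIso r) where
  refl _ := ⟨Equiv.refl _, fun _ _ => Iff.rfl⟩
  symm := fun ⟨e, he⟩ => ⟨e.symm, fun a b => by simpa using (he (e.symm a) (e.symm b)).symm⟩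
  trans := fun ⟨e, he⟩ ⟨e', he'⟩ => ⟨e.trans e', fun a b => (he a b).trans (he' (e a) (e b))⟩

theorem finite_isoClasses (r : V → V → Prop) (n : ℕ) :
    Finite (Quot fun s t : {w : Finset V // w.card = n} => InducedIso r s.val t.val) := by
  -- an isomorphism class is determined by the relations on `Fin n` that are isomorphic to it
  let codes : {w : Finset V // w.card = n} → Set (Fin n → Fin n → Prop) := fun s =>
    {M | ∃ e : s.val ≃ Fin n, ∀ a b, M (e a) (e b) ↔ r a b}
  have hcodes : ∀ s t : {w : Finset V // w.card = n}, InducedIso r s.val t.val →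
      codes s = codes t := by
    rintro s t ⟨f, hf⟩
    ext M
    constructor
    · rintro ⟨e, he⟩
      exact ⟨f.symm.trans e, fun a b => by simpa [hf] using he (f.symm a) (f.symm b)⟩
    · rintro ⟨e, he⟩
      exact ⟨f.trans e, fun a b => (he (f a) (f b)).trans (hf a b).symm⟩
  refine Finite.of_injective (Quot.lift codes hcodes) ?_
  rintro ⟨s⟩ ⟨t⟩ h
  obtain e : s.val ≃ Fin n := Fintype.equivFinOfCardEq (by simp [s.2])
  obtain ⟨e', he'⟩ : (fun i j => r (e.symm i) (e.symm j)) ∈ codes t := by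
    change codes s = codes t at h
    exact h ▸ ⟨e, fun a b => by simp⟩
  exact Quot.sound ⟨e.trans e'.symm, fun a b => by simpa using he' (e'.symm (e a)) (e'.symm (e b))⟩

open scoped Classical in
noncomputable def score (r : V → V → Prop) (s : Finset V) (x : V) : ℕ := #{y ∈ s | r x y}

noncomputable def scores (r : V → V → Prop) (s : Finset V) : Multiset ℕ := s.val.map (score r s)

theorem score_map (r : W → W → Prop) (R : V → V → Prop) {U : Finset V} (e : V ↪ W)
    (h : ∀ a ∈ U, ∀ b ∈ U, r (e a) (e b) ↔ R a b) {a : V} (ha : a ∈ U) :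
    score r (U.map e) (e a) = score R U a := by
  classical
  simp only [score, filter_map, card_map]
  exact congrArg card (filter_congr fun b hb => h a ha b hb)

theorem scores_map (r : W → W → Prop) (R : V → V → Prop) (U : Finset V) (e : V ↪ W)
    (h : ∀ a ∈ U, ∀ b ∈ U, r (e a) (e b) ↔ R a b) : scores r (U.map e) = scores R U := by
  rw [scores, scores, map_val, Multiset.map_map]
  exact Multiset.map_congr rfl fun a ha => score_map r R e h ha

theorem scores_eq_of_inducedIso {r : V → V → Prop} {s t : Finset V} (h : InducedIso r s t) :
    scores r s = scores r t := by
  obtain ⟨e, he⟩ := h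
  -- both sides are the scores of `r` restricted to `s`, pushed forward along two embeddings
  have ht : (univ : Finset s).map (e.toEmbedding.trans (Embedding.subtype _)) = t := by
    rw [← map_map, map_univ_equiv, univ_eq_attach, attach_map_val]
  rw [← ht, scores_map r (fun a b : s => r a b) _ _ fun a _ b _ => (he a b).symm,
    ← scores_map r (fun a b : s => r a b) _ (Embedding.subtype _) fun a _ b _ => Iff.rfl,
    univ_eq_attach, attach_map_val]

theorem card_le_profile {ι : Type*} [Finite ι] (r : V → V → Prop) {n : ℕ} (F : ι → Finset V)
    (hcard : ∀ i, #(F i) = n) (hinj : ∀ i j, scores r (F i) = scores r (F j) → i = j) :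
    Nat.card ι ≤ profile r n := by
  have := finite_isoClasses r n
  refine Nat.card_le_card_of_injective (fun i => Quot.mk _ ⟨F i, hcard i⟩) fun i j h => ?_
  have := ((inducedIso_equivalence r).comap Subtype.val).eqvGen_iff.mp (Quot.eqvGen_exact h)
  exact hinj i j (scores_eq_of_inducedIso this)

theorem one_le_profile_zero (r : V → V → Prop) : 1 ≤ profile r 0 := by
  simpa using card_le_profile (ι := Unit) r (fun _ => ∅) (fun _ => rfl) fun _ _ _ => rfl

end Scores

section Counting

theorem card_filter_eq (S : Finset ℕ) (j : ℕ) : #{x ∈ S | x = j} = if j ∈ S then 1 else 0 := by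
  rw [filter_eq']
  split_ifs <;> simp

theorem card_filter_lt_succ (S : Finset ℕ) (j : ℕ) :
    #{x ∈ S | x < j + 1} = #{x ∈ S | x < j} + if j ∈ S then 1 else 0 := by
  have : {x ∈ S | x < j + 1} = {x ∈ S | x < j} ∪ {x ∈ S | x = j} := by
    ext
    simp [Nat.le_iff_lt_or_eq, and_or_left]
  rw [this, card_union_of_disjoint (disjoint_filter.2 fun _ _ h₁ h₂ => by simp_all),
    card_filter_eq]

theorem card_filter_le_add_card_filter_lt (S : Finset ℕ) (j : ℕ) :
    #{x ∈ S | j ≤ x} + #{x ∈ S | x < j} = #S := by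
  rw [← card_filter_add_card_filter_not (s := S) (j ≤ ·)]
  simp only [not_le]

theorem card_range_filter_lt {m j : ℕ} (hj : j ≤ m) : #{x ∈ range m | x < j} = j := by
  rw [show {x ∈ range m | x < j} = range j by ext; simp; omega, card_range]

theorem card_range_filter_gt (m j : ℕ) : #{x ∈ range m | j < x} = m - 1 - j := by
  rw [show {x ∈ range m | j < x} = Ioo j m by ext; simp; omega, Nat.card_Ioo]
  omega

theorem card_range_filter_ge (m j : ℕ) : #{x ∈ range m | j ≤ x} = m - j := by
  rw [show {x ∈ range m | j ≤ x} = Ico j m by ext; simp; omega, Nat.card_Ico]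

theorem card_range_filter_ne {m j : ℕ} (hj : j < m) : #{x ∈ range m | x ≠ j} = m - 1 := by
  rw [filter_ne', card_erase_of_mem (mem_range.mpr hj), card_range]

theorem eq_of_forall_lt_mem_iff {S S' : Finset ℕ} {L : ℕ} (hS : S ⊆ range L)
    (hS' : S' ⊆ range L) (h : ∀ j < L, j ∈ S ↔ j ∈ S') : S = S' := by
  ext j
  by_cases hj : j < L
  · exact h j hj
  · exact iff_of_false (fun h => hj (mem_range.mp (hS h))) fun h => hj (mem_range.mp (hS' h))

theorem eq_of_card_filter_lt_succ_eq {S S' : Finset ℕ} {L : ℕ} (hS : S ⊆ range L)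
    (hS' : S' ⊆ range L) (h : ∀ j < L, #{x ∈ S | x < j + 1} = #{x ∈ S' | x < j + 1}) :
    S = S' := by
  refine eq_of_forall_lt_mem_iff hS hS' fun j hj => ?_
  have hbelow : #{x ∈ S | x < j} = #{x ∈ S' | x < j} := by
    rcases j with _ | i
    · simp
    · exact h i (by omega)
  have := h j hj
  rw [card_filter_lt_succ, card_filter_lt_succ, hbelow] at this
  split_ifs at this <;> simp_all

theorem monotone_add_card_sub_card_filter_lt (S : Finset ℕ) (c : ℕ) :
    Monotone fun j => j + (#S - #{x ∈ S | x < j + c}) :=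
  monotone_nat_of_le_succ fun j => by
    have h₁ := card_filter_lt_succ S (j + c)
    have h₂ := card_filter_le S (· < j + c + 1)
    rw [show j + 1 + c = j + c + 1 by omega]
    split_ifs at h₁ <;> omega

theorem strictMono_add_card_filter_lt_succ (S : Finset ℕ) :
    StrictMono fun j => j + #{x ∈ S | x < j + 1} :=
  strictMono_nat_of_lt_succ fun j => by
    have := card_filter_lt_succ S (j + 1)
    split_ifs at this <;> omega

theorem strictMono_add_card_filter_lt_add_card_filter_lt_succ (S : Finset ℕ) :
    StrictMono fun j => j + #{x ∈ S | x < j} + #{x ∈ S | x < j + 1} :=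
  strictMono_nat_of_lt_succ fun j => by
    have h₁ := card_filter_lt_succ S j
    have h₂ := card_filter_lt_succ S (j + 1)
    split_ifs at h₁ h₂ <;> omega

def selectSet {k : ℕ} (A : Finset (Fin k)) : Finset ℕ :=
  univ.image fun i : Fin k => 2 * i + if i ∈ A then 1 else 0

theorem selectSet_subset {k : ℕ} (A : Finset (Fin k)) : selectSet A ⊆ range (2 * k) := by
  intro x hx
  obtain ⟨i, -, rfl⟩ := mem_image.mp hx
  have := i.2
  simp only [mem_range]
  split_ifs <;> omega

theorem card_selectSet {k : ℕ} (A : Finset (Fin k)) : #(selectSet A) = k := by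
  rw [selectSet, card_image_of_injective _ fun i j hij => ?_, card_univ, Fintype.card_fin]
  exact Fin.ext (by split_ifs at hij <;> omega)

theorem selectSet_injective {k : ℕ} : Function.Injective (selectSet (k := k)) := by
  have key : ∀ (A : Finset (Fin k)) (i : Fin k), i ∈ A ↔ 2 * (i : ℕ) + 1 ∈ selectSet A := by
    intro A i
    simp only [selectSet, mem_image, mem_univ, true_and]
    refine ⟨fun hi => ⟨i, by simp [hi]⟩, fun ⟨j, hj⟩ => ?_⟩
    split_ifs at hj with hjA
    · rwa [← Fin.ext (by omega : (j : ℕ) = i)]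
    · omega
  intro A B h
  ext i
  rw [key, key, h]

end Counting

section MonotoneSequences

variable {g g' : ℕ → ℕ}

theorem Monotone.exists_filter_range_lt_eq_range (hg : Monotone g) (m θ : ℕ) :
    ∃ J, {j ∈ range m | g j < θ} = range J := by
  refine ⟨#{j ∈ range m | g j < θ}, eq_of_subset_of_card_le (fun j hj => ?_) (by simp)⟩
  have : range (j + 1) ⊆ {j ∈ range m | g j < θ} := fun i hi => by
    simp only [mem_filter, mem_range] at hi hj ⊢
    exact ⟨by omega, (hg (by omega)).trans_lt hj.2⟩
  rw [mem_range]
  simpa using card_le_card this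

theorem Monotone.eqOn_range_of_map_eq (hg : Monotone g) (hg' : Monotone g') {J : ℕ}
    (h : (range J).val.map g = (range J).val.map g') : ∀ j < J, g j = g' j := by
  have hl : (List.range J).map g = (List.range J).map g' := by
    refine List.Perm.eq_of_sortedLE ?_ ?_ (Multiset.coe_eq_coe.mp h)
    · exact List.sortedLE_iff_pairwise.2 (List.pairwise_map.2 (List.pairwise_le_range.imp (hg ·)))
    · exact List.sortedLE_iff_pairwise.2 (List.pairwise_map.2 (List.pairwise_le_range.imp (hg' ·)))
  intro j hj
  simpa [hj] using congrArg (·[j]?) hl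

theorem Monotone.apply_eq_of_filter_map_eq (hg : Monotone g) (hg' : Monotone g') {m θ : ℕ}
    (h : ((range m).val.map g).filter (· < θ) = ((range m).val.map g').filter (· < θ)) :
    ∀ j < m, g j < θ → g j = g' j := by
  obtain ⟨J, hJ⟩ := hg.exists_filter_range_lt_eq_range m θ
  obtain ⟨J', hJ'⟩ := hg'.exists_filter_range_lt_eq_range m θ
  have hval : ∀ (f : ℕ → ℕ) (J : ℕ), {j ∈ range m | f j < θ} = range J →
      ((range m).val.map f).filter (· < θ) = (range J).val.map f := fun f J hf => by
    rw [Multiset.filter_map, ← hf]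
    rfl
  rw [hval g J hJ, hval g' J' hJ'] at h
  obtain rfl : J = J' := by simpa using congrArg Multiset.card h
  intro j hjm hj
  exact hg.eqOn_range_of_map_eq hg' h j (mem_range.mp (hJ ▸ mem_filter.mpr ⟨mem_range.mpr hjm, hj⟩))

theorem Monotone.apply_eq_of_map_add_eq (hg : Monotone g) (hg' : Monotone g')
    {M M' : Multiset ℕ} {m θ : ℕ} (hM : ∀ x ∈ M, θ ≤ x) (hM' : ∀ x ∈ M', θ ≤ x)
    (h : (range m).val.map g + M = (range m).val.map g' + M') :
    ∀ j < m, g j < θ → g j = g' j := by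
  refine hg.apply_eq_of_filter_map_eq hg' ?_
  have := congrArg (Multiset.filter (· < θ)) h
  rwa [Multiset.filter_add, Multiset.filter_add,
    Multiset.filter_eq_nil.2 fun x hx => (hM x hx).not_gt,
    Multiset.filter_eq_nil.2 fun x hx => (hM' x hx).not_gt, add_zero, add_zero] at this

theorem StrictMono.apply_eq_of_filter_image_eq (hg : StrictMono g) (hg' : StrictMono g')
    {m θ : ℕ} (h : ((range m).image g).filter (· < θ) = ((range m).image g').filter (· < θ)) :
    ∀ j < m, g j < θ → g j = g' j := by
  refine hg.monotone.apply_eq_of_filter_map_eq hg'.monotone ?_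
  have := congrArg Finset.val h
  rwa [filter_val, filter_val, image_val_of_injOn hg.injective.injOn,
    image_val_of_injOn hg'.injective.injOn] at this

end MonotoneSequences

section VertexSets

def rowSet (A B : Finset ℕ) : Finset (ℕ × Fin 2) :=
  (A.map (Embedding.sectL ℕ 0)).disjUnion (B.map (Embedding.sectL ℕ 1)) (by
    simp [disjoint_left])

theorem fst_mem_of_mem_rowSet {A B : Finset ℕ} {p : ℕ × Fin 2} (hp : p ∈ rowSet A B) :
    p.1 ∈ A ∪ B := by
  simp only [rowSet, mem_disjUnion, mem_map, Embedding.sectL_apply] at hp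
  rcases hp with ⟨x, hx, rfl⟩ | ⟨x, hx, rfl⟩ <;> simp [hx]

theorem mk_zero_mem_rowSet {A B : Finset ℕ} {x : ℕ} : (x, 0) ∈ rowSet A B ↔ x ∈ A := by
  simp [rowSet]

theorem card_rowSet (A B : Finset ℕ) : #(rowSet A B) = #A + #B := by
  rw [rowSet, card_disjUnion, card_map, card_map]

open scoped Classical in
theorem card_filter_rowSet (P : ℕ × Fin 2 → Prop) (A B : Finset ℕ) :
    #{p ∈ rowSet A B | P p} = #{x ∈ A | P (x, 0)} + #{x ∈ B | P (x, 1)} := by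
  rw [rowSet, filter_disjUnion, card_disjUnion, filter_map, filter_map, card_map, card_map]
  rfl

open scoped Classical in
theorem score_rowSet (r : ℕ × Fin 2 → ℕ × Fin 2 → Prop) (A B : Finset ℕ) (u : ℕ × Fin 2) :
    score r (rowSet A B) u = #{x ∈ A | r u (x, 0)} + #{x ∈ B | r u (x, 1)} :=
  card_filter_rowSet _ A B

theorem scores_rowSet (r : ℕ × Fin 2 → ℕ × Fin 2 → Prop) (A B : Finset ℕ) :
    scores r (rowSet A B) = A.val.map (fun x => score r (rowSet A B) (x, 0)) +
      B.val.map (fun x => score r (rowSet A B) (x, 1)) := by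
  rw [scores, rowSet, disjUnion_val, Multiset.map_add, map_val, map_val, Multiset.map_map,
    Multiset.map_map]
  rfl

def c3Set (A B : Finset ℕ) : Finset (ℕ × Fin 3) :=
  (A.map (Embedding.sectL ℕ 0)).disjUnion
    ((B.map (Embedding.sectL ℕ 1)).disjUnion (B.map (Embedding.sectL ℕ 2)) (by
      simp [disjoint_left])) (by simp [disjoint_left])

theorem fst_mem_of_mem_c3Set {A B : Finset ℕ} {p : ℕ × Fin 3} (hp : p ∈ c3Set A B) :
    p.1 ∈ A ∪ B := by
  simp only [c3Set, mem_disjUnion, mem_map, Embedding.sectL_apply] at hp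
  rcases hp with ⟨x, hx, rfl⟩ | ⟨x, hx, rfl⟩ | ⟨x, hx, rfl⟩ <;> simp [hx]

theorem mk_zero_mem_c3Set {A B : Finset ℕ} {x : ℕ} : (x, 0) ∈ c3Set A B ↔ x ∈ A := by
  simp [c3Set]

theorem card_c3Set (A B : Finset ℕ) : #(c3Set A B) = #A + 2 * #B := by
  rw [c3Set, card_disjUnion, card_disjUnion, card_map, card_map, card_map]
  ring

open scoped Classical in
theorem score_c3Set (r : ℕ × Fin 3 → ℕ × Fin 3 → Prop) (A B : Finset ℕ) (u : ℕ × Fin 3) :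
    score r (c3Set A B) u =
      #{x ∈ A | r u (x, 0)} + #{x ∈ B | r u (x, 1)} + #{x ∈ B | r u (x, 2)} := by
  rw [score, c3Set, filter_disjUnion, card_disjUnion, filter_disjUnion, card_disjUnion,
    filter_map, filter_map, filter_map, card_map, card_map, card_map, add_assoc]
  rfl

open scoped Classical in
theorem score_insertNone {α : Type*} (r : Option α → Option α → Prop) (X : Finset α)
    (u : Option α) :
    score r (insertNone X) u = (if r u none then 1 else 0) + #{p ∈ X | r u (some p)} := by
  rw [score, show insertNone X = cons none (X.map Embedding.some) (by simp) from rfl, filter_cons]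
  split_ifs <;> simp [filter_map, add_comm]

end VertexSets

section Decoding

variable {k m : ℕ}

theorem injOn_scores_rowSet_of_rowOne_beats_rowZero {R : ℕ × Fin 2 → ℕ × Fin 2 → Prop}
    (hm : 6 * k ≤ m) (h₀₀ : ∀ j x, R (j, 0) (x, 0) ↔ x < j) (h₀₁ : ∀ j x, R (j, 0) (x, 1) ↔ x = j)
    (h₁₀ : ∀ s x, R (s, 1) (x, 0) ↔ x ≠ s) :
    Set.InjOn (fun S => scores R (rowSet (range m) S)) {S | S ⊆ range (2 * k) ∧ #S = k} := by
  have hscores : ∀ S : Finset ℕ, scores R (rowSet (range m) S) =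
      (range m).val.map (fun j => j + if j ∈ S then 1 else 0) +
        S.val.map (fun s => score R (rowSet (range m) S) (s, 1)) := by
    intro S
    rw [scores_rowSet]
    congr 1
    refine Multiset.map_congr rfl fun j hj => ?_
    simp only [score_rowSet, h₀₀, h₀₁, card_range_filter_lt (mem_range.mp hj).le, card_filter_eq]
  have hrow₁ : ∀ S ⊆ range (2 * k), ∀ x ∈ S.val.map fun s => score R (rowSet (range m) S) (s, 1),
      2 * k + 1 ≤ x := by
    intro S hS x hx
    obtain ⟨s, hs, rfl⟩ := Multiset.mem_map.mp hx
    have := mem_range.mp (hS hs)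
    simp only [score_rowSet, h₁₀, card_range_filter_ne (show s < m by omega)]
    omega
  have hmono : ∀ S : Finset ℕ, Monotone fun j => j + if j ∈ S then 1 else 0 := fun S =>
    monotone_nat_of_le_succ fun j => by split_ifs <;> omega
  rintro S ⟨hS, -⟩ S' ⟨hS', -⟩ h
  have heq := (hmono S).apply_eq_of_map_add_eq (hmono S') (hrow₁ S hS) (hrow₁ S' hS')
    (by rw [← hscores, ← hscores]; exact h)
  refine eq_of_forall_lt_mem_iff hS hS' fun j hj => ?_
  have := heq j (by omega) (by split_ifs <;> omega)
  split_ifs at this <;> simp_all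

theorem injOn_scores_hRel (hm : 6 * k ≤ m) :
    Set.InjOn (fun S => scores (hRel omegaStarLT) (rowSet (range m) S))
      {S | S ⊆ range (2 * k) ∧ #S = k} :=
  injOn_scores_rowSet_of_rowOne_beats_rowZero hm (by simp [hRel, omegaStarLT])
    (by simp [hRel, omegaStarLT, eq_comm]) (by simp [hRel, omegaStarLT, eq_comm])

theorem injOn_scores_kRel (hm : 6 * k ≤ m) :
    Set.InjOn (fun S => scores (kRel omegaStarLT) (rowSet (range m) S))
      {S | S ⊆ range (2 * k) ∧ #S = k} :=
  injOn_scores_rowSet_of_rowOne_beats_rowZero hm (by simp [kRel, omegaStarLT])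
    (by simp [kRel, omegaStarLT, eq_comm]) (by simp [kRel, omegaStarLT, eq_comm])

theorem score_tRel_rowSet_zero (S : Finset ℕ) {j : ℕ} (hj : j < m) :
    score (tRel omegaStarLT) (rowSet (range m) S) (j, 0) = j + (#S - #{x ∈ S | x < j}) := by
  have h₀ : ∀ x, tRel omegaStarLT (j, 0) (x, 0) ↔ x < j := by simp [tRel, omegaStarLT]
  have h₁ : ∀ x, tRel omegaStarLT (j, 0) (x, 1) ↔ j ≤ x := by
    simp [tRel, omegaStarLT, le_iff_eq_or_lt]
  have := card_filter_le_add_card_filter_lt S j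
  simp only [score_rowSet, h₀, h₁, card_range_filter_lt hj.le]
  omega

theorem le_score_tRel_rowSet_one (S : Finset ℕ) (s : ℕ) :
    m - 1 - s ≤ score (tRel omegaStarLT) (rowSet (range m) S) (s, 1) := by
  have h₀ : ∀ x, tRel omegaStarLT (s, 1) (x, 0) ↔ s < x := by simp [tRel, omegaStarLT]
  simp only [score_rowSet, h₀, card_range_filter_gt]
  omega

theorem injOn_scores_tRel (hm : 6 * k ≤ m) :
    Set.InjOn (fun S => scores (tRel omegaStarLT) (rowSet (range m) S))
      {S | S ⊆ range (2 * k) ∧ #S = k} := by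
  have hscores : ∀ S : Finset ℕ, scores (tRel omegaStarLT) (rowSet (range m) S) =
      (range m).val.map (fun j => j + (#S - #{x ∈ S | x < j})) +
        S.val.map (fun s => score (tRel omegaStarLT) (rowSet (range m) S) (s, 1)) := by
    intro S
    rw [scores_rowSet]
    congr 1
    exact Multiset.map_congr rfl fun j hj => score_tRel_rowSet_zero S (mem_range.mp hj)
  have hrow₁ : ∀ S ⊆ range (2 * k), ∀ x ∈ S.val.map
      (fun s => score (tRel omegaStarLT) (rowSet (range m) S) (s, 1)), 3 * k + 1 ≤ x := by
    intro S hS x hx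
    obtain ⟨s, hs, rfl⟩ := Multiset.mem_map.mp hx
    have := mem_range.mp (hS hs)
    have := le_score_tRel_rowSet_one (m := m) S s
    omega
  have hmono : ∀ S : Finset ℕ, Monotone fun j => j + (#S - #{x ∈ S | x < j}) := fun S => by
    simpa using monotone_add_card_sub_card_filter_lt S 0
  rintro S ⟨hS, hSk⟩ S' ⟨hS', hS'k⟩ h
  have heq := (hmono S).apply_eq_of_map_add_eq (hmono S') (hrow₁ S hS) (hrow₁ S' hS')
    (by rw [← hscores, ← hscores]; exact h)
  refine eq_of_card_filter_lt_succ_eq hS hS' fun j hj => ?_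
  have := heq (j + 1) (by omega) (by omega)
  have := card_filter_le S (· < j + 1)
  have := card_filter_le S' (· < j + 1)
  omega

theorem score_uRel_rowSet_one (S : Finset ℕ) {j : ℕ} (hj : j < m) :
    score (uRel omegaLT) (rowSet S (range m)) (j, 1) = j + (#S - #{x ∈ S | x < j + 1}) := by
  have h₀ : ∀ x : ℕ, uRel omegaLT (j, 1) (x, 0) ↔ j + 1 ≤ x := by simp [uRel, omegaLT]
  have h₁ : ∀ x, uRel omegaLT (j, 1) (x, 1) ↔ x < j := by simp [uRel, omegaLT]
  have := card_filter_le_add_card_filter_lt S (j + 1)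
  simp only [score_rowSet, h₀, h₁, card_range_filter_lt hj.le]
  omega

theorem le_score_uRel_rowSet_zero (S : Finset ℕ) (s : ℕ) :
    m - s ≤ score (uRel omegaLT) (rowSet S (range m)) (s, 0) := by
  have h₁ : ∀ x, uRel omegaLT (s, 0) (x, 1) ↔ s ≤ x := by simp [uRel, omegaLT, le_iff_eq_or_lt]
  simp only [score_rowSet, h₁, card_range_filter_ge]
  omega

theorem injOn_scores_uRel (hm : 6 * k ≤ m) :
    Set.InjOn (fun S => scores (uRel omegaLT) (rowSet S (range m)))
      {S | S ⊆ range (2 * k) ∧ #S = k} := by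
  have hscores : ∀ S : Finset ℕ, scores (uRel omegaLT) (rowSet S (range m)) =
      (range m).val.map (fun j => j + (#S - #{x ∈ S | x < j + 1})) +
        S.val.map (fun s => score (uRel omegaLT) (rowSet S (range m)) (s, 0)) := by
    intro S
    rw [scores_rowSet, add_comm]
    congr 1
    exact Multiset.map_congr rfl fun j hj => score_uRel_rowSet_one S (mem_range.mp hj)
  have hrow₀ : ∀ S ⊆ range (2 * k), ∀ x ∈ S.val.map
      (fun s => score (uRel omegaLT) (rowSet S (range m)) (s, 0)), 3 * k + 1 ≤ x := by
    intro S hS x hx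
    obtain ⟨s, hs, rfl⟩ := Multiset.mem_map.mp hx
    have := mem_range.mp (hS hs)
    have := le_score_uRel_rowSet_zero (m := m) S s
    omega
  rintro S ⟨hS, hSk⟩ S' ⟨hS', hS'k⟩ h
  have heq := (monotone_add_card_sub_card_filter_lt S 1).apply_eq_of_map_add_eq
    (monotone_add_card_sub_card_filter_lt S' 1) (hrow₀ S hS) (hrow₀ S' hS')
    (by rw [← hscores, ← hscores]; exact h)
  refine eq_of_card_filter_lt_succ_eq hS hS' fun j hj => ?_
  have := heq j (by omega) (by omega)
  have := card_filter_le S (· < j + 1)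
  have := card_filter_le S' (· < j + 1)
  omega

theorem c3Rel_omegaStarLT_iff (j x : ℕ) (i i' : Fin 3) :
    c3Rel omegaStarLT (j, i) (x, i') ↔ x < j + if i' = i + 1 then 1 else 0 := by
  fin_cases i <;> fin_cases i' <;> simp [c3Rel, omegaStarLT] <;> omega

theorem score_c3Rel_c3Set {S : Finset ℕ} (hS : S ⊆ range m) {u : ℕ × Fin 3}
    (hu : u ∈ c3Set (range m) S) :
    score (c3Rel omegaStarLT) (c3Set (range m) S) u =
      u.1 + #{x ∈ S | x < u.1} + #{x ∈ S | x < u.1 + 1} := by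
  simp only [c3Set, mem_disjUnion, mem_map, Embedding.sectL_apply] at hu
  rcases hu with ⟨j, hj, rfl⟩ | ⟨j, hj, rfl⟩ | ⟨j, hj, rfl⟩ <;>
    simp [score_c3Set, c3Rel_omegaStarLT_iff, -Order.lt_add_one_iff]
  · rw [card_range_filter_lt (mem_range.mp hj).le]
    omega
  · rw [card_range_filter_lt (mem_range.mp (hS hj)).le]
  · rw [card_range_filter_lt (mem_range.mp (hS hj)), card_filter_lt_succ S j, if_pos hj]
    omega

theorem scores_toFinset_c3Rel_c3Set {S : Finset ℕ} (hS : S ⊆ range m) :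
    (scores (c3Rel omegaStarLT) (c3Set (range m) S)).toFinset =
      (range m).image fun j => j + #{x ∈ S | x < j} + #{x ∈ S | x < j + 1} := by
  ext v
  simp only [scores, Multiset.mem_toFinset, Multiset.mem_map, mem_val, mem_image]
  constructor
  · rintro ⟨u, hu, rfl⟩
    exact ⟨u.1, union_subset subset_rfl hS (fst_mem_of_mem_c3Set hu),
      (score_c3Rel_c3Set hS hu).symm⟩
  · rintro ⟨j, hj, rfl⟩
    exact ⟨(j, 0), mk_zero_mem_c3Set.2 hj, score_c3Rel_c3Set hS (mk_zero_mem_c3Set.2 hj)⟩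

theorem injOn_scores_c3Rel (hm : 6 * k ≤ m) :
    Set.InjOn (fun S => scores (c3Rel omegaStarLT) (c3Set (range m) S))
      {S | S ⊆ range (2 * k) ∧ #S = k} := by
  rintro S ⟨hS, hSk⟩ S' ⟨hS', hS'k⟩ h
  have hSm : S ⊆ range m := hS.trans (range_subset_range.2 (by omega))
  have hS'm : S' ⊆ range m := hS'.trans (range_subset_range.2 (by omega))
  have heq := (strictMono_add_card_filter_lt_add_card_filter_lt_succ S).apply_eq_of_filter_image_eq
    (strictMono_add_card_filter_lt_add_card_filter_lt_succ S') (θ := 4 * k) (by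
      rw [← scores_toFinset_c3Rel_c3Set hSm, ← scores_toFinset_c3Rel_c3Set hS'm]
      exact congrArg (fun M : Multiset ℕ => M.toFinset.filter (· < 4 * k)) h)
  -- `heq` only pins down `#{x ∈ S | x < j} + #{x ∈ S | x < j + 1}`; recover the counts inductively.
  have hbelow : ∀ j ≤ 2 * k, #{x ∈ S | x < j} = #{x ∈ S' | x < j} := by
    intro j hj
    induction j with
    | zero => simp
    | succ i ih =>
      have := card_filter_le S (· < i)
      have := card_filter_le S (· < i + 1)
      have := heq i (by omega) (by omega)
      have := ih (by omega)
      omega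
  exact eq_of_card_filter_lt_succ_eq hS hS' fun j hj => hbelow (j + 1) hj

theorem vRel_omegaStarLT_some_some (j x : ℕ) (i i' : Fin 2) :
    vRel omegaStarLT (some (j, i)) (some (x, i')) ↔ x < j + if i = 0 ∧ i' = 1 then 1 else 0 := by
  fin_cases i <;> fin_cases i' <;> simp [vRel, omegaStarLT]
  omega

theorem score_vRel_some {S : Finset ℕ} (hS : S ⊆ range m) {p : ℕ × Fin 2}
    (hp : p ∈ rowSet (range m) S) :
    score (vRel omegaStarLT) (insertNone (rowSet (range m) S)) (some p) =
      p.1 + #{x ∈ S | x < p.1 + 1} := by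
  simp only [rowSet, mem_disjUnion, mem_map, Embedding.sectL_apply] at hp
  rcases hp with ⟨j, hj, rfl⟩ | ⟨j, hj, rfl⟩ <;>
    simp only [score_insertNone, card_filter_rowSet, vRel_omegaStarLT_some_some] <;>
    simp [vRel, -Order.lt_add_one_iff]
  · rw [card_range_filter_lt (mem_range.mp hj).le]
  · rw [card_range_filter_lt (mem_range.mp (hS hj)).le, card_filter_lt_succ, if_pos hj]
    omega

theorem score_vRel_none (S : Finset ℕ) :
    score (vRel omegaStarLT) (insertNone (rowSet (range m) S)) none = m := by
  simp only [score_insertNone, card_filter_rowSet]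
  simp [vRel]

theorem scores_toFinset_vRel {S : Finset ℕ} (hS : S ⊆ range m) :
    (scores (vRel omegaStarLT) (insertNone (rowSet (range m) S))).toFinset =
      insert m ((range m).image fun j => j + #{x ∈ S | x < j + 1}) := by
  ext v
  simp only [scores, Multiset.mem_toFinset, Multiset.mem_map, mem_val, mem_insert, mem_image]
  constructor
  · rintro ⟨_ | p, hp, rfl⟩
    · exact Or.inl (score_vRel_none S)
    · have hp : p ∈ rowSet (range m) S := by simpa using hp
      exact Or.inr ⟨p.1, union_subset subset_rfl hS (fst_mem_of_mem_rowSet hp),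
        (score_vRel_some hS hp).symm⟩
  · rintro (rfl | ⟨j, hj, rfl⟩)
    · exact ⟨none, by simp, score_vRel_none S⟩
    · have hj₀ : (j, 0) ∈ rowSet (range m) S := mk_zero_mem_rowSet.2 hj
      exact ⟨some (j, 0), by simpa using hj₀, score_vRel_some hS hj₀⟩

theorem injOn_scores_vRel (hm : 6 * k ≤ m) :
    Set.InjOn (fun S => scores (vRel omegaStarLT) (insertNone (rowSet (range m) S)))
      {S | S ⊆ range (2 * k) ∧ #S = k} := by
  rintro S ⟨hS, hSk⟩ S' ⟨hS', hS'k⟩ h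
  have hSm : S ⊆ range m := hS.trans (range_subset_range.2 (by omega))
  have hS'm : S' ⊆ range m := hS'.trans (range_subset_range.2 (by omega))
  have heq := (strictMono_add_card_filter_lt_succ S).apply_eq_of_filter_image_eq
    (strictMono_add_card_filter_lt_succ S') (θ := m) (by
      have := congrArg (fun M : Multiset ℕ => M.toFinset.filter (· < m)) h
      simpa only [scores_toFinset_vRel hSm, scores_toFinset_vRel hS'm, filter_insert,
        lt_irrefl, if_false] using this)
  refine eq_of_card_filter_lt_succ_eq hS hS' fun j hj => ?_
  have := card_filter_le S (· < j + 1)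
  have := heq j (by omega) (by omega)
  omega

end Decoding

section Transfer

theorem two_pow_le_profile_of_injOn {V : Type u} {W : Type v} {R : V → V → Prop}
    {r : W → W → Prop} {k n : ℕ} (U : Finset ℕ → Finset V) (e : V ↪ W)
    (hinj : Set.InjOn (fun S => scores R (U S)) {S | S ⊆ range (2 * k) ∧ #S = k})
    (hcard : ∀ S, #S = k → #(U S) = n)
    (he : ∀ S ⊆ range (2 * k), ∀ a ∈ U S, ∀ b ∈ U S, r (e a) (e b) ↔ R a b) :
    2 ^ k ≤ profile r n := by
  have := card_le_profile r (fun A : Finset (Fin k) => (U (selectSet A)).map e)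
    (fun A => by rw [card_map, hcard _ (card_selectSet A)]) fun A B h => by
      rw [scores_map r R _ e (he _ (selectSet_subset A)),
        scores_map r R _ e (he _ (selectSet_subset B))] at h
      exact selectSet_injective (hinj ⟨selectSet_subset A, card_selectSet A⟩
        ⟨selectSet_subset B, card_selectSet B⟩ h)
  simpa [Nat.card_eq_fintype_card, Fintype.card_finset] using this

def colReflect (m : ℕ) : ℕ ↪ ℕ :=
  ⟨fun x => if x < m then m - 1 - x else x, fun x y h => by
    simp only at h
    split_ifs at h <;> omega⟩

theorem colReflect_lt_colReflect {m x y : ℕ} (hx : x < m) (hy : y < m) :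
    colReflect m x < colReflect m y ↔ y < x := by
  change (if x < m then m - 1 - x else x) < (if y < m then m - 1 - y else y) ↔ y < x
  rw [if_pos hx, if_pos hy]
  omega

theorem exists_embedding_columns {lt lt₀ : ℕ → ℕ → Prop} (hlt : lt = omegaLT ∨ lt = omegaStarLT)
    (hlt₀ : lt₀ = omegaLT ∨ lt₀ = omegaStarLT) (m : ℕ) :
    ∃ e : ℕ ↪ ℕ, ∀ x < m, ∀ y < m, lt (e x) (e y) ↔ lt₀ x y := by
  rcases hlt with rfl | rfl <;> rcases hlt₀ with rfl | rfl
  · exact ⟨.refl ℕ, fun _ _ _ _ => Iff.rfl⟩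
  · exact ⟨colReflect m, fun x hx y hy => colReflect_lt_colReflect hx hy⟩
  · exact ⟨colReflect m, fun x hx y hy => colReflect_lt_colReflect hy hx⟩
  · exact ⟨.refl ℕ, fun _ _ _ _ => Iff.rfl⟩

theorem two_pow_le_profile_of_columns {ι : Type} (X : (ℕ → ℕ → Prop) → ℕ × ι → ℕ × ι → Prop)
    (hX : ∀ (lt lt₀ : ℕ → ℕ → Prop) (e : ℕ ↪ ℕ) (a b : ℕ × ι),
      (lt (e a.1) (e b.1) ↔ lt₀ a.1 b.1) → (lt (e b.1) (e a.1) ↔ lt₀ b.1 a.1) →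
        (X lt (e a.1, a.2) (e b.1, b.2) ↔ X lt₀ a b))
    {lt lt₀ : ℕ → ℕ → Prop} (hlt : lt = omegaLT ∨ lt = omegaStarLT)
    (hlt₀ : lt₀ = omegaLT ∨ lt₀ = omegaStarLT) {k m n : ℕ} (hkm : 2 * k ≤ m)
    (U : Finset ℕ → Finset (ℕ × ι)) (hU : ∀ S, ∀ a ∈ U S, a.1 ∈ range m ∪ S)
    (hinj : Set.InjOn (fun S => scores (X lt₀) (U S)) {S | S ⊆ range (2 * k) ∧ #S = k})
    (hcard : ∀ S, #S = k → #(U S) = n) :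
    2 ^ k ≤ profile (X lt) n := by
  obtain ⟨e, he⟩ := exists_embedding_columns hlt hlt₀ m
  refine two_pow_le_profile_of_injOn U (e.prodMap (.refl ι)) hinj hcard fun S hS a ha b hb => ?_
  have hcol : ∀ a ∈ U S, a.1 < m := fun a ha => mem_range.mp <|
    union_subset subset_rfl (hS.trans (range_subset_range.2 hkm)) (hU S a ha)
  exact hX lt lt₀ e a b (he _ (hcol a ha) _ (hcol b hb)) (he _ (hcol b hb) _ (hcol a ha))

end Transfer

section Families

variable {lt : ℕ → ℕ → Prop} {k n : ℕ}

theorem two_pow_le_profile_hRel (hlt : lt = omegaLT ∨ lt = omegaStarLT) (hkn : 8 * k < n) :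
    2 ^ k ≤ profile (hRel lt) n :=
  two_pow_le_profile_of_columns hRel
    (fun _ _ e _ _ h₁ h₂ => by simp only [hRel, h₁, h₂, e.injective.eq_iff]) hlt (.inr rfl)
    (m := n - k) (by omega) (fun S => rowSet (range (n - k)) S)
    (fun _ _ => fst_mem_of_mem_rowSet) (injOn_scores_hRel (by omega))
    fun S hS => by rw [card_rowSet, card_range, hS]; omega

theorem two_pow_le_profile_kRel (hlt : lt = omegaLT ∨ lt = omegaStarLT) (hkn : 8 * k < n) :
    2 ^ k ≤ profile (kRel lt) n :=
  two_pow_le_profile_of_columns kRel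
    (fun _ _ e _ _ h₁ h₂ => by simp only [kRel, h₁, h₂, e.injective.eq_iff]) hlt (.inr rfl)
    (m := n - k) (by omega) (fun S => rowSet (range (n - k)) S)
    (fun _ _ => fst_mem_of_mem_rowSet) (injOn_scores_kRel (by omega))
    fun S hS => by rw [card_rowSet, card_range, hS]; omega

theorem two_pow_le_profile_tRel (hlt : lt = omegaLT ∨ lt = omegaStarLT) (hkn : 8 * k < n) :
    2 ^ k ≤ profile (tRel lt) n :=
  two_pow_le_profile_of_columns tRel
    (fun _ _ e _ _ h₁ h₂ => by simp only [tRel, h₁, h₂, e.injective.eq_iff]) hlt (.inr rfl)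
    (m := n - k) (by omega) (fun S => rowSet (range (n - k)) S)
    (fun _ _ => fst_mem_of_mem_rowSet) (injOn_scores_tRel (by omega))
    fun S hS => by rw [card_rowSet, card_range, hS]; omega

theorem two_pow_le_profile_uRel (hlt : lt = omegaLT ∨ lt = omegaStarLT) (hkn : 8 * k < n) :
    2 ^ k ≤ profile (uRel lt) n :=
  two_pow_le_profile_of_columns uRel
    (fun _ _ e _ _ h₁ h₂ => by simp only [uRel, h₁, h₂, e.injective.eq_iff]) hlt (.inl rfl)
    (m := n - k) (by omega) (fun S => rowSet S (range (n - k)))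
    (fun S _ ha => union_comm S _ ▸ fst_mem_of_mem_rowSet ha) (injOn_scores_uRel (by omega))
    fun S hS => by rw [card_rowSet, card_range, hS]; omega

theorem two_pow_le_profile_c3Rel (hlt : lt = omegaLT ∨ lt = omegaStarLT) (hkn : 8 * k < n) :
    2 ^ k ≤ profile (c3Rel lt) n :=
  two_pow_le_profile_of_columns c3Rel
    (fun _ _ e _ _ h₁ _ => by simp only [c3Rel, h₁, e.injective.eq_iff]) hlt (.inr rfl)
    (m := n - 2 * k) (by omega) (fun S => c3Set (range (n - 2 * k)) S)
    (fun _ _ => fst_mem_of_mem_c3Set) (injOn_scores_c3Rel (by omega))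
    fun S hS => by rw [card_c3Set, card_range, hS]; omega

theorem two_pow_le_profile_vRel (hlt : lt = omegaLT ∨ lt = omegaStarLT) (hkn : 8 * k < n) :
    2 ^ k ≤ profile (vRel lt) n := by
  obtain ⟨e, he⟩ := exists_embedding_columns hlt (.inr rfl) (n - k - 1)
  refine two_pow_le_profile_of_injOn (fun S => insertNone (rowSet (range (n - k - 1)) S))
    (e.prodMap (.refl _)).optionMap (injOn_scores_vRel (by omega))
    (fun S hS => by rw [card_insertNone, card_rowSet, card_range, hS]; omega) ?_
  have hcol : ∀ S ⊆ range (2 * k), ∀ p, some p ∈ insertNone (rowSet (range (n - k - 1)) S) →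
      p.1 < n - k - 1 := fun S hS p hp => mem_range.mp <|
    union_subset subset_rfl (hS.trans (range_subset_range.2 (by omega)))
      (fst_mem_of_mem_rowSet (by simpa using hp))
  rintro S hS (_ | a) ha (_ | b) hb
  · simp [vRel]
  · simp [vRel]
  · simp [vRel]
  · simp [vRel, he _ (hcol S hS a ha) _ (hcol S hS b hb), e.injective.eq_iff]

end Families

theorem exists_exp_le_of_two_pow_div_le (p : ℕ → ℕ) {d : ℕ} (hd : 0 < d) (h₀ : 1 ≤ p 0)
    (h : ∀ n, 2 ^ (n / d) ≤ p (n + 1)) : ∃ a c : ℝ, 0 < a ∧ 1 < c ∧ ∀ n, a * c ^ n ≤ p n := by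
  refine ⟨1 / 2, 2 ^ (1 / d : ℝ), by norm_num, Real.one_lt_rpow (by norm_num) (by positivity), ?_⟩
  rintro (_ | n)
  · simpa using (show (1 / 2 : ℝ) ≤ 1 by norm_num).trans (by exact_mod_cast h₀)
  have hexp : ((n + 1 : ℕ) : ℝ) / d ≤ (n / d : ℕ) + 1 := by
    rw [div_le_iff₀ (by positivity)]
    exact_mod_cast (show n + 1 ≤ (n / d + 1) * d by nlinarith [Nat.lt_div_mul_add (a := n) hd])
  calc 1 / 2 * (2 ^ (1 / d : ℝ)) ^ (n + 1)
      = 1 / 2 * (2 : ℝ) ^ (((n + 1 : ℕ) : ℝ) / d) := by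
        rw [← Real.rpow_natCast, ← Real.rpow_mul (by norm_num), one_div_mul_eq_div (d : ℝ)]
    _ ≤ 1 / 2 * (2 : ℝ) ^ (((n / d : ℕ) : ℝ) + 1) := by gcongr; norm_num
    _ = 2 ^ (n / d) := by rw [Real.rpow_add_one (by norm_num), Real.rpow_natCast]; ring
    _ ≤ p (n + 1) := by exact_mod_cast h n

theorem exists_exp_le_profile {V : Type u} (r : V → V → Prop)
    (h : ∀ k n, 8 * k < n → 2 ^ k ≤ profile r n) :
    ∃ a c : ℝ, 0 < a ∧ 1 < c ∧ ∀ n, a * c ^ n ≤ profile r n :=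
  exists_exp_le_of_two_pow_div_le _ (d := 8) (by norm_num) (one_le_profile_zero r)
    fun n => h _ _ (by omega)

/-- For every tournament `T ∈ 𝔅` the profile of `T` grows at least
exponentially: there are reals `a > 0` and `c > 1` with `φ_T(n) ≥ a·cⁿ` for all `n`. -/
theorem frakB_profile_exponential :
    ∀ S ∈ frakB, ∃ a c : ℝ, 0 < a ∧ 1 < c ∧ ∀ n : ℕ, a * c ^ n ≤ (S.profile n : ℝ) := by
  have hω : omegaLT = omegaLT ∨ omegaLT = omegaStarLT := .inl rfl
  have hω' : omegaStarLT = omegaLT ∨ omegaStarLT = omegaStarLT := .inr rfl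
  intro S hS
  simp only [frakB, List.mem_cons, List.not_mem_nil, or_false] at hS
  rcases hS with rfl | rfl | rfl | rfl | rfl | rfl | rfl | rfl | rfl | rfl | rfl | rfl <;>
    refine exists_exp_le_profile _ fun k n hkn => ?_
  exacts [two_pow_le_profile_c3Rel hω hkn, two_pow_le_profile_vRel hω hkn,
    two_pow_le_profile_tRel hω hkn, two_pow_le_profile_uRel hω hkn,
    two_pow_le_profile_hRel hω hkn, two_pow_le_profile_kRel hω hkn,
    two_pow_le_profile_c3Rel hω' hkn, two_pow_le_profile_vRel hω' hkn,
    two_pow_le_profile_tRel hω' hkn, two_pow_le_profile_uRel hω' hkn,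
    two_pow_le_profile_hRel hω' hkn, two_pow_le_profile_kRel hω' hkn]
end
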